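/- arXiv:2311.15165 — 8 statements merged into one kernel-verified Lean document; each statement's English description precedes it below -/
import Mathlib

section
/- Let c ≥ 2 and let g, h : ℝ^d → ℝ^c be functions whose components satisfy 0 ≤ g_i(x) ≤ 1 and 0 ≤ h_i(x) ≤ 1 for all x ∈ ℝ^d and all i ∈ {1,…,c}. Fix a norm ‖·‖ on ℝ^d, a point x ∈ ℝ^d, a radius r ≥ 0, and α ∈ [1/2, 1]. Let y ∈ {1,…,c} satisfy h_y(x) ≥ h_i(x) for all i. Suppose h is certifiably robust at x with margin (1−α)/α and radius r, i.e., h_y(x+δ) ≥ h_i(x+δ) + (1−α)/α for all i ≠ y and all δ ∈ ℝ^d with ‖δ‖ ≤ r. Then for all δ ∈ ℝ^d with ‖δ‖ ≤ r and all i ∈ {1,…,c}, it holds that (1−α)·g_y(x+δ) + α·h_y(x+δ) ≥ (1−α)·g_i(x+δ) + α·h_i(x+δ); that is, the mixed classifier h^α still predicts class y on x+δ. -/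
/-- The `g`-part can move the mixture by at most `1 - α`, which is exactly what the margin
`(1 - α) / α` of the `h`-part recovers after scaling by `α`. -/
theorem mix_le_mix_of_add_margin_le {α p q u v : ℝ} (hα₀ : 0 < α) (hα₁ : α ≤ 1)
    (hpq : p ≤ q + 1) (huv : u + (1 - α) / α ≤ v) :
    (1 - α) * p + α * u ≤ (1 - α) * q + α * v :=
  calc (1 - α) * p + α * u
      ≤ (1 - α) * (q + 1) + α * u := by gcongr
    _ = (1 - α) * q + α * (u + (1 - α) / α) := by field_simp; ring
    _ ≤ (1 - α) * q + α * v := by gcongr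

theorem mixed_classifier_robust_general
    {d c : ℕ}
    (N : (Fin d → ℝ) → ℝ)                      -- a fixed norm on ℝ^d
    (g h : (Fin d → ℝ) → Fin c → ℝ)
    (hg : ∀ x i, g x i ∈ Set.Icc (0 : ℝ) 1)
    (x : Fin d → ℝ) (r : ℝ)
    (α : ℝ) (hα : α ∈ Set.Icc (1 / 2 : ℝ) 1)
    (y : Fin c)
    (hrob : ∀ i, i ≠ y → ∀ δ : Fin d → ℝ, N δ ≤ r →
      h (x + δ) i + (1 - α) / α ≤ h (x + δ) y) :
    ∀ δ : Fin d → ℝ, N δ ≤ r → ∀ i : Fin c,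
      (1 - α) * g (x + δ) i + α * h (x + δ) i ≤
        (1 - α) * g (x + δ) y + α * h (x + δ) y := by
  intro δ hδ i
  obtain rfl | hiy := eq_or_ne i y
  · rfl
  have hg_diff : g (x + δ) i ≤ g (x + δ) y + 1 := by
    linarith [(hg (x + δ) i).2, (hg (x + δ) y).1]
  exact mix_le_mix_of_add_margin_le (by linarith [hα.1]) hα.2 hg_diff (hrob i hiy δ hδ)

/-- **Mixed classifier robustness (Lemma 1).**
If the robust base classifier `h` is certifiably robust at `x` with margin `(1-α)/α` and
radius `r`, and `α ∈ [1/2, 1]`, then the mixed classifier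
`h^α_i = log ((1-α) g_i + α h_i)` still predicts class `y = argmax_i h_i(x)` on every
perturbed input `x + δ` with `‖δ‖ ≤ r`. -/
theorem mixed_classifier_robust
    {d c : ℕ} (hc : 2 ≤ c)
    (N : (Fin d → ℝ) → ℝ)                      -- a fixed norm on ℝ^d
    (g h : (Fin d → ℝ) → Fin c → ℝ)
    (hg : ∀ x i, g x i ∈ Set.Icc (0 : ℝ) 1)
    (hh : ∀ x i, h x i ∈ Set.Icc (0 : ℝ) 1)
    (x : Fin d → ℝ) (r : ℝ) (hr : 0 ≤ r)
    (α : ℝ) (hα : α ∈ Set.Icc (1 / 2 : ℝ) 1)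
    (y : Fin c) (hy : ∀ i, h x i ≤ h x y)
    (hrob : ∀ i, i ≠ y → ∀ δ : Fin d → ℝ, N δ ≤ r →
      h (x + δ) i + (1 - α) / α ≤ h (x + δ) y) :
    ∀ δ : Fin d → ℝ, N δ ≤ r → ∀ i : Fin c,
      (1 - α) * g (x + δ) i + α * h (x + δ) i ≤
        (1 - α) * g (x + δ) y + α * h (x + δ) y :=
  mixed_classifier_robust_general N g h hg x r α hα y hrob
end

section
/- Let α ∈ [1/2, 1). For any real numbers h_y, h_i ∈ [0,1] with h_y − h_i < (1−α)/α, there exist real numbers g_y, g_i ∈ [0,1] such that (1−α)·g_y + α·h_y < (1−α)·g_i + α·h_i. Consequently, the margin hypothesis (1−α)/α in the mixed-classifier robustness lemma cannot be weakened when no assumption is made on the standard classifier g beyond its outputs lying in [0,1]: if the robust classifier's gap between the top class and another class falls below (1−α)/α at a perturbed input, there is a choice of probability outputs for g under which the mixed classifier misclassifies that input. -/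
theorem mixed_classifier_margin_tight_general
    (α : ℝ) (hα : α ∈ Set.Ico (1 / 2 : ℝ) 1)
    (hy hi : ℝ)
    (hgap : hy - hi < (1 - α) / α) :
    ∃ gy gi : ℝ, gy ∈ Set.Icc (0 : ℝ) 1 ∧ gi ∈ Set.Icc (0 : ℝ) 1 ∧
      (1 - α) * gy + α * hy < (1 - α) * gi + α * hi := by
  have hα_pos : 0 < α := by linarith [hα.1]
  have hscaled : (hy - hi) * α < 1 - α := (lt_div_iff₀ hα_pos).mp hgap
  exact ⟨0, 1, ⟨le_rfl, zero_le_one⟩, ⟨zero_le_one, le_rfl⟩, by linarith⟩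

/-- **Tightness of the margin `(1-α)/α` in the mixed-classifier robustness lemma.**
If `α ∈ [1/2, 1)` and the robust classifier's probability gap `h_y - h_i` falls below
`(1-α)/α`, then there exist probability outputs `g_y, g_i ∈ [0,1]` for the standard
classifier under which the mixed classifier prefers class `i` over class `y`. -/
theorem mixed_classifier_margin_tight
    (α : ℝ) (hα : α ∈ Set.Ico (1 / 2 : ℝ) 1)
    (hy hi : ℝ)
    (hhy : hy ∈ Set.Icc (0 : ℝ) 1) (hhi : hi ∈ Set.Icc (0 : ℝ) 1)
    (hgap : hy - hi < (1 - α) / α) :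
    ∃ gy gi : ℝ, gy ∈ Set.Icc (0 : ℝ) 1 ∧ gi ∈ Set.Icc (0 : ℝ) 1 ∧
      (1 - α) * gy + α * hy < (1 - α) * gi + α * hi :=
  mixed_classifier_margin_tight_general α hα hy hi hgap
end

section
/- Let c ≥ 2 and let h : ℝ^d → ℝ^c be such that each component h_i is Lipschitz continuous with respect to a fixed norm ‖·‖ on ℝ^d, with Lipschitz constant L_i > 0. Fix x ∈ ℝ^d, let y satisfy h_y(x) ≥ h_i(x) for all i, and let μ ≥ 0. Then for every δ ∈ ℝ^d with ‖δ‖ ≤ (h_y(x) − h_i(x) − μ)/(L_y + L_i) for all i ≠ y, it holds that h_y(x+δ) ≥ h_i(x+δ) + μ for all i ≠ y; i.e., h is certifiably robust at x with margin μ and radius min_{i≠y} (h_y(x) − h_i(x) − μ)/(L_y + L_i). -/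
/-! If `g` exceeds `f` by at least `μ + (L_g + L_f) ‖δ‖` at `x`, then moving to `x + δ` lowers
`g` by at most `L_g ‖δ‖` and raises `f` by at most `L_f ‖δ‖`, so `g` still exceeds `f` by `μ`. -/

theorem add_le_of_lipschitz_of_gap {E : Type*} [AddCommGroup E] {N : E → ℝ} {f g : E → ℝ}
    {Lf Lg : ℝ} (hf : ∀ x x' : E, |f x' - f x| ≤ Lf * N (x' - x))
    (hg : ∀ x x' : E, |g x' - g x| ≤ Lg * N (x' - x)) {x δ : E} {μ : ℝ}
    (hδ : (Lg + Lf) * N δ ≤ g x - f x - μ) :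
    f (x + δ) + μ ≤ g (x + δ) := by
  have hf := abs_le.1 (hf x (x + δ))
  have hg := abs_le.1 (hg x (x + δ))
  rw [add_sub_cancel_left] at hf hg
  linarith [hf.2, hg.1]

theorem lipschitz_certified_robust_with_margin_general
    {d c : ℕ}
    (N : (Fin d → ℝ) → ℝ)                      -- a fixed norm on ℝ^d
    (h : (Fin d → ℝ) → Fin c → ℝ)
    (L : Fin c → ℝ) (hL : ∀ i, 0 < L i)
    (hLip : ∀ i : Fin c, ∀ x x' : Fin d → ℝ, |h x' i - h x i| ≤ L i * N (x' - x))
    (x : Fin d → ℝ) (y : Fin c)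
    (μ : ℝ) :
    ∀ δ : Fin d → ℝ,
      (∀ i, i ≠ y → N δ ≤ (h x y - h x i - μ) / (L y + L i)) →
      ∀ i, i ≠ y → h (x + δ) i + μ ≤ h (x + δ) y := by
  intro δ hδ i hi
  have hpos : 0 < L y + L i := add_pos (hL y) (hL i)
  exact add_le_of_lipschitz_of_gap (hLip i) (hLip y) ((le_div_iff₀' hpos).1 (hδ i hi))

/-- **Lipschitz classifiers are certifiably robust with margin.**
If every component `h_i` is Lipschitz with constant `L_i > 0` w.r.t. a fixed norm `N`,
`y = argmax_i h_i(x)`, and `μ ≥ 0`, then `h` is certifiably robust at `x` with margin `μ`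
and radius `min_{i ≠ y} (h_y(x) - h_i(x) - μ) / (L_y + L_i)`. -/
theorem lipschitz_certified_robust_with_margin
    {d c : ℕ} (hc : 2 ≤ c)
    (N : (Fin d → ℝ) → ℝ)                      -- a fixed norm on ℝ^d
    (h : (Fin d → ℝ) → Fin c → ℝ)
    (L : Fin c → ℝ) (hL : ∀ i, 0 < L i)
    (hLip : ∀ i : Fin c, ∀ x x' : Fin d → ℝ, |h x' i - h x i| ≤ L i * N (x' - x))
    (x : Fin d → ℝ) (y : Fin c) (hy : ∀ i, h x i ≤ h x y)
    (μ : ℝ) (hμ : 0 ≤ μ) :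
    ∀ δ : Fin d → ℝ,
      (∀ i, i ≠ y → N δ ≤ (h x y - h x i - μ) / (L y + L i)) →
      ∀ i, i ≠ y → h (x + δ) i + μ ≤ h (x + δ) y :=
  lipschitz_certified_robust_with_margin_general N h L hL hLip x y μ
end

section
/- Let c ≥ 2 and let g, h : ℝ^d → ℝ^c be functions whose components satisfy 0 ≤ g_i(x) ≤ 1 and 0 ≤ h_i(x) ≤ 1 for all x and i, and assume each h_i is Lipschitz continuous with respect to a fixed norm ‖·‖ on ℝ^d with Lipschitz constant L_i > 0. Fix x ∈ ℝ^d, let y satisfy h_y(x) ≥ h_i(x) for all i, and let α ∈ [1/2, 1]. Define r^α(x) = min_{i≠y} (α·(h_y(x) − h_i(x)) + α − 1)/(α·(L_y + L_i)). Then for every δ ∈ ℝ^d with ‖δ‖ ≤ r^α(x) and every i ∈ {1,…,c}, it holds that (1−α)·g_y(x+δ) + α·h_y(x+δ) ≥ (1−α)·g_i(x+δ) + α·h_i(x+δ); that is, the mixed classifier h^α predicts class y on all such perturbed inputs x+δ. -/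
/-!
Lipschitz continuity of `h` lets the margin `h_y - h_i` shrink by at most `(L_y + L_i) ‖δ‖`
between `x` and `x + δ`, so inside the radius `α (h_y - h_i)` stays at least `1 - α` at `x + δ`.
This is enough because the contributions `(1 - α) g` of the other classifier differ by at
most `1 - α`, as `g` takes values in `[0, 1]`.
-/

lemma mixture_le_mixture_of_margin {α a b p q : ℝ} (hα : α ≤ 1) (ha : a ≤ 1) (hb : 0 ≤ b)
    (hmargin : 1 - α ≤ α * (p - q)) :
    (1 - α) * a + α * q ≤ (1 - α) * b + α * p := by
  nlinarith [mul_nonneg (sub_nonneg.2 hα) (sub_nonneg.2 ha), mul_nonneg (sub_nonneg.2 hα) hb]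

lemma margin_sub_le_margin_add_of_lipschitz {E ι : Type*} [AddCommGroup E] (N : E → ℝ)
    (f : E → ι → ℝ) (L : ι → ℝ) (hf : ∀ i x x', |f x' i - f x i| ≤ L i * N (x' - x))
    (x δ : E) (i j : ι) :
    f x j - f x i - (L j + L i) * N δ ≤ f (x + δ) j - f (x + δ) i := by
  have hj := (abs_le.1 (hf j x (x + δ))).1
  have hi := (abs_le.1 (hf i x (x + δ))).2
  rw [add_sub_cancel_left] at hj hi
  linarith

lemma one_sub_le_mul_of_le_div {α m K n : ℝ} (hK : 0 < α * K)
    (hn : n ≤ (α * m + α - 1) / (α * K)) :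
    1 - α ≤ α * (m - K * n) := by
  rw [le_div_iff₀ hK] at hn
  linarith

/-- **Theorem 3: Lipschitz-based certified radius of the mixed classifier.**
With base probabilities `g, h` in `[0,1]`, each `h_i` Lipschitz with constant `L_i > 0`,
`y = argmax_i h_i(x)` and `α ∈ [1/2, 1]`, the mixed classifier
`h^α_i = log ((1-α) g_i + α h_i)` predicts class `y` on every `x + δ` with
`‖δ‖ ≤ r^α(x) = min_{i ≠ y} (α (h_y(x) - h_i(x)) + α - 1) / (α (L_y + L_i))`. -/
theorem mixed_classifier_lipschitz_certified_radius
    {d c : ℕ} (hc : 2 ≤ c)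
    (N : (Fin d → ℝ) → ℝ)                      -- a fixed norm on ℝ^d
    (g h : (Fin d → ℝ) → Fin c → ℝ)
    (hg : ∀ x i, g x i ∈ Set.Icc (0 : ℝ) 1)
    (L : Fin c → ℝ) (hL : ∀ i, 0 < L i)
    (hLip : ∀ i : Fin c, ∀ x x' : Fin d → ℝ, |h x' i - h x i| ≤ L i * N (x' - x))
    (x : Fin d → ℝ) (y : Fin c)
    (α : ℝ) (hα : α ∈ Set.Icc (1 / 2 : ℝ) 1) :
    ∀ δ : Fin d → ℝ,
      N δ ≤ (Finset.univ.filter (fun i : Fin c => i ≠ y)).inf'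
          (by
            obtain ⟨i, hi⟩ := Fintype.exists_ne_of_one_lt_card
              (by simpa using lt_of_lt_of_le one_lt_two hc) y
            exact ⟨i, by simp [hi]⟩)
          (fun i => (α * (h x y - h x i) + α - 1) / (α * (L y + L i))) →
      ∀ i : Fin c,
        (1 - α) * g (x + δ) i + α * h (x + δ) i ≤
          (1 - α) * g (x + δ) y + α * h (x + δ) y := by
  intro δ hδ i
  rcases eq_or_ne i y with rfl | hiy
  · exact le_rfl
  have hα_pos : 0 < α := by linarith [hα.1]
  have hδ_i : N δ ≤ (α * (h x y - h x i) + α - 1) / (α * (L y + L i)) :=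
    hδ.trans (Finset.inf'_le _ (by simp [hiy]))
  have hmargin := one_sub_le_mul_of_le_div (mul_pos hα_pos (add_pos (hL y) (hL i))) hδ_i
  have hshrink := margin_sub_le_margin_add_of_lipschitz N h L hLip x δ i y
  refine mixture_le_mixture_of_margin hα.2 (hg _ i).2 (hg _ y).1 ?_
  exact hmargin.trans (mul_le_mul_of_nonneg_left (by linarith) hα_pos.le)
end

section
/- Let c ≥ 2 and let g, h : ℝ^d → ℝ^c have componentwise values in [0,1]. Fix x ∈ ℝ^d, a norm ‖·‖ on ℝ^d, ε > 0, α ∈ [1/2, 1], and let y satisfy h_y(x) ≥ h_i(x) for all i. Suppose there are local Lipschitz-type constants L_1^x, …, L_c^x > 0 such that for all δ with ‖δ‖ ≤ ε: h_y(x) − h_y(x+δ) ≤ ε·L_y^x and h_i(x+δ) − h_i(x) ≤ ε·L_i^x for all i ≠ y. If min_{i≠y} (α·(h_y(x) − h_i(x)) + α − 1)/(α·(L_y^x + L_i^x)) ≥ ε, then for every δ with ‖δ‖ ≤ ε and every i, it holds that (1−α)·g_y(x+δ) + α·h_y(x+δ) ≥ (1−α)·g_i(x+δ) + α·h_i(x+δ);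 i.e., the mixed classifier h^α predicts class y throughout the ball of radius ε around x. -/
/-!
For `i ≠ y` the `g`-part of the mixture can favour `i` over `y` by at most `1 - α`, because
`g` takes values in `[0, 1]`. The local bounds keep the `h`-margin `h_y - h_i` on the ball within
`ε (L_y + L_i)` of its value at `x`, and the radius condition says exactly that `α` times this
perturbed margin still covers `1 - α`.
-/

theorem mixture_le_mixture_of_margin_s6 {α gi gy hi hy : ℝ} (hα : α ≤ 1) (hgi : gi ≤ 1)
    (hgy : 0 ≤ gy) (hmargin : 1 - α ≤ α * (hy - hi)) :
    (1 - α) * gi + α * hi ≤ (1 - α) * gy + α * hy := by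
  have hα' : 0 ≤ 1 - α := sub_nonneg.2 hα
  linarith [mul_le_mul_of_nonneg_left hgi hα', mul_nonneg hα' hgy]

/-- **Local-Lipschitz version of the certified-radius theorem.**
If `h` satisfies local Lipschitz-type bounds with constants `L_i^x > 0` on the norm ball of
radius `ε` around `x`, and the local certified radius
`min_{i ≠ y} (α (h_y(x) - h_i(x)) + α - 1) / (α (L_y^x + L_i^x))` is at least `ε`,
then the mixed classifier predicts class `y = argmax_i h_i(x)` throughout the ball of
radius `ε` around `x`. -/
theorem mixed_classifier_local_lipschitz_certified
    {d c : ℕ} (hc : 2 ≤ c)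
    (N : (Fin d → ℝ) → ℝ)                      -- a fixed norm on ℝ^d
    (g h : (Fin d → ℝ) → Fin c → ℝ)
    (hg : ∀ x i, g x i ∈ Set.Icc (0 : ℝ) 1)
    (x : Fin d → ℝ) (ε : ℝ)
    (α : ℝ) (hα : α ∈ Set.Icc (1 / 2 : ℝ) 1)
    (y : Fin c)
    (Lx : Fin c → ℝ) (hLx : ∀ i, 0 < Lx i)
    (hlocal_y : ∀ δ : Fin d → ℝ, N δ ≤ ε → h x y - h (x + δ) y ≤ ε * Lx y)
    (hlocal_i : ∀ i, i ≠ y → ∀ δ : Fin d → ℝ, N δ ≤ ε →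
      h (x + δ) i - h x i ≤ ε * Lx i)
    (hrad : ε ≤ (Finset.univ.filter (fun i : Fin c => i ≠ y)).inf'
        (by
          obtain ⟨i, hi⟩ := Fintype.exists_ne_of_one_lt_card
            (by simpa using lt_of_lt_of_le one_lt_two hc) y
          exact ⟨i, by simp [hi]⟩)
        (fun i => (α * (h x y - h x i) + α - 1) / (α * (Lx y + Lx i)))) :
    ∀ δ : Fin d → ℝ, N δ ≤ ε → ∀ i : Fin c,
      (1 - α) * g (x + δ) i + α * h (x + δ) i ≤
        (1 - α) * g (x + δ) y + α * h (x + δ) y := by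
  intro δ hδ i
  rcases eq_or_ne i y with rfl | hiy
  · rfl
  have hα0 : 0 < α := by linarith [hα.1]
  have hrad_i : ε * (α * (Lx y + Lx i)) ≤ α * (h x y - h x i) + α - 1 :=
    (le_div_iff₀ (mul_pos hα0 (add_pos (hLx y) (hLx i)))).1
      ((Finset.le_inf'_iff _ _).1 hrad i (by simpa using hiy))
  refine mixture_le_mixture_of_margin_s6 hα.2 (hg _ i).2 (hg _ y).1 ?_
  calc 1 - α ≤ α * ((h x y - ε * Lx y) - (h x i + ε * Lx i)) := by linarith
    _ ≤ α * (h (x + δ) y - h (x + δ) i) := by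
      gcongr <;> linarith [hlocal_y δ hδ, hlocal_i i hiy δ hδ]
end

section
/- Let σ > 0 and let f : ℝ^d → ℝ be measurable with 0 ≤ f(z) ≤ 1 for all z. Define the Gaussian smoothing f̂(x) = E_{ξ ∼ N(0, σ²I_d)}[f(x+ξ)]. Then f̂ is Lipschitz continuous with respect to the Euclidean (ℓ₂) norm with Lipschitz constant √(2/(π σ²)): |f̂(x') − f̂(x)| ≤ √(2/(π σ²))·‖x' − x‖₂ for all x, x' ∈ ℝ^d. -/
open MeasureTheory ProbabilityTheory

/-- The isotropic Gaussian measure `N(0, σ² I_d)` on `ℝ^d` (with the Euclidean norm),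
the `d`-fold product of the one-dimensional Gaussian with mean `0` and variance `σ²`. -/
noncomputable def isoGaussian (d : ℕ) (σ : ℝ) :
    Measure (EuclideanSpace ℝ (Fin d)) :=
  (Measure.pi fun _ : Fin d => gaussianReal 0 (Real.toNNReal (σ ^ 2))).map
    (MeasurableEquiv.toLp 2 (Fin d → ℝ))

open scoped NNReal ENNReal Real

namespace GaussAux

lemma map_withDensity {α β : Type*} [MeasurableSpace α] [MeasurableSpace β]
    (μ : Measure α) (ν : Measure β) (e : α ≃ᵐ β)
    (h : MeasurePreserving e μ ν) (g : α → ℝ≥0∞) (hg : Measurable g) :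
    (μ.withDensity g).map e = ν.withDensity (g ∘ e.symm) := by
  ext s hs
  rw [Measure.map_apply e.measurable hs, withDensity_apply _ (e.measurable hs),
    withDensity_apply _ hs, ← h.map_eq,
    setLIntegral_map hs (hg.comp e.symm.measurable) e.measurable]
  congr 1
  ext x
  simp

lemma pi_gauss_eq {d : ℕ} (v : ℝ≥0) (hv : v ≠ 0) :
    (Measure.pi fun _ : Fin d => gaussianReal 0 v)
      = (volume : Measure (Fin d → ℝ)).withDensity
          (fun x => ENNReal.ofReal (∏ i, gaussianPDFReal 0 v (x i))) := by
  refine Measure.pi_eq fun s hs => ?_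
  rw [withDensity_apply _ (MeasurableSet.univ_pi hs)]
  have hInt : Integrable
      (fun x : Fin d → ℝ => ∏ i, (s i).indicator (gaussianPDFReal 0 v) (x i)) :=
    Integrable.fintype_prod (𝕜 := ℝ) fun i => (integrable_gaussianPDFReal 0 v).indicator (hs i)
  have key : ∀ x : Fin d → ℝ,
      (Set.univ.pi s).indicator
          (fun x : Fin d → ℝ => ENNReal.ofReal (∏ i, gaussianPDFReal 0 v (x i))) x
        = ENNReal.ofReal (∏ i, (s i).indicator (gaussianPDFReal 0 v) (x i)) := by
    intro x
    by_cases hx : x ∈ Set.univ.pi s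
    · rw [Set.indicator_of_mem hx]
      congr 1
      exact Finset.prod_congr rfl fun i _ =>
        (Set.indicator_of_mem (hx i (Set.mem_univ i)) _).symm
    · rw [Set.indicator_of_notMem hx]
      obtain ⟨i, hi⟩ := not_forall.mp (fun h => hx fun i _ => h i)
      rw [Finset.prod_eq_zero (Finset.mem_univ i)]
      · simp
      · exact Set.indicator_of_notMem hi _
  calc ∫⁻ x in Set.univ.pi s,
        ENNReal.ofReal (∏ i, gaussianPDFReal 0 v (x i)) ∂(volume : Measure (Fin d → ℝ))
      = ∫⁻ x : Fin d → ℝ, (Set.univ.pi s).indicator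
          (fun x : Fin d → ℝ => ENNReal.ofReal (∏ i, gaussianPDFReal 0 v (x i))) x := by
        rw [lintegral_indicator (MeasurableSet.univ_pi hs)]
    _ = ∫⁻ x : Fin d → ℝ,
          ENNReal.ofReal (∏ i, (s i).indicator (gaussianPDFReal 0 v) (x i)) := by
        simp_rw [key]
    _ = ENNReal.ofReal (∫ x : Fin d → ℝ, ∏ i, (s i).indicator (gaussianPDFReal 0 v) (x i)) := by
        rw [ofReal_integral_eq_lintegral_ofReal hInt]
        exact ae_of_all _ fun x => Finset.prod_nonneg fun i _ =>
          Set.indicator_nonneg (fun y _ => gaussianPDFReal_nonneg 0 v y) _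
    _ = ENNReal.ofReal (∏ i, ∫ x : ℝ, (s i).indicator (gaussianPDFReal 0 v) x) := by
        exact congrArg ENNReal.ofReal (integral_fintype_prod_eq_prod (ι := Fin d) (fun i => (s i).indicator (gaussianPDFReal 0 v)))
    _ = ∏ i, ENNReal.ofReal (∫ x : ℝ, (s i).indicator (gaussianPDFReal 0 v) x) := by
        refine ENNReal.ofReal_prod_of_nonneg fun i _ => ?_
        exact integral_nonneg (Set.indicator_nonneg fun y _ => gaussianPDFReal_nonneg 0 v y)
    _ = ∏ _i : Fin d, gaussianReal 0 v (s _i) := by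
        refine Finset.prod_congr rfl fun i _ => ?_
        rw [integral_indicator (hs i), ← gaussianReal_apply_eq_integral 0 hv]

end GaussAux
namespace GaussAux

noncomputable def Dnorm (d : ℕ) (σ : ℝ) (ξ : EuclideanSpace ℝ (Fin d)) : ℝ≥0∞ :=
  ENNReal.ofReal (((Real.sqrt (2 * π * σ ^ 2))⁻¹) ^ d * Real.exp (-‖ξ‖ ^ 2 / (2 * σ ^ 2)))

lemma Dnorm_meas (d : ℕ) (σ : ℝ) : Measurable (Dnorm d σ) := by
  apply ENNReal.measurable_ofReal.comp
  exact (((measurable_norm.pow_const 2).neg.div_const _).exp.const_mul _)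

lemma coe_toNNReal_sq (σ : ℝ) (hσ : 0 < σ) : ((Real.toNNReal (σ ^ 2) : ℝ≥0) : ℝ) = σ ^ 2 :=
  Real.coe_toNNReal _ (sq_nonneg σ)

lemma toNNReal_sq_ne_zero (σ : ℝ) (hσ : 0 < σ) : Real.toNNReal (σ ^ 2) ≠ 0 := by
  simp only [ne_eq, Real.toNNReal_eq_zero, not_le]
  positivity

lemma isoGaussian_eq (d : ℕ) (σ : ℝ) (hσ : 0 < σ) :
    isoGaussian d σ
      = (volume : Measure (EuclideanSpace ℝ (Fin d))).withDensity (Dnorm d σ) := by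
  set v : ℝ≥0 := Real.toNNReal (σ ^ 2) with hv_def
  have hv : v ≠ 0 := toNNReal_sq_ne_zero σ hσ
  have hvr : (v : ℝ) = σ ^ 2 := coe_toNNReal_sq σ hσ
  rw [isoGaussian, pi_gauss_eq v hv,
    map_withDensity _ _ (MeasurableEquiv.toLp 2 (Fin d → ℝ))
      (EuclideanSpace.volume_preserving_symm_measurableEquiv_toLp (Fin d)).symm _
      (by
        apply ENNReal.measurable_ofReal.comp
        exact Finset.measurable_prod _ fun i _ =>
          (measurable_gaussianPDFReal 0 v).comp (measurable_pi_apply i))]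
  congr 1
  funext ξ
  show ENNReal.ofReal (∏ i, gaussianPDFReal 0 v
      (((MeasurableEquiv.toLp 2 (Fin d → ℝ)).symm ξ) i)) = Dnorm d σ ξ
  have hcoord : ∀ i, ((MeasurableEquiv.toLp 2 (Fin d → ℝ)).symm ξ) i = ξ i :=
    fun i => rfl
  rw [Dnorm]
  congr 1
  simp_rw [hcoord, gaussianPDFReal, hvr, sub_zero]
  rw [Finset.prod_mul_distrib, Finset.prod_const, ← Real.exp_sum, Finset.card_univ,
    Fintype.card_fin]
  congr 1
  rw [← Finset.sum_div, Finset.sum_neg_distrib, neg_div]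
  have hnorm : ‖ξ‖ ^ 2 = ∑ i, ξ i ^ 2 := by
    rw [EuclideanSpace.norm_eq, Real.sq_sqrt (by positivity)]
    exact Finset.sum_congr rfl fun i _ => sq_abs _
  rw [hnorm, neg_div]

lemma isoGaussian_map_rot (d : ℕ) (σ : ℝ) (hσ : 0 < σ)
    (R : EuclideanSpace ℝ (Fin d) ≃ₗᵢ[ℝ] EuclideanSpace ℝ (Fin d)) :
    (isoGaussian d σ).map R = isoGaussian d σ := by
  rw [isoGaussian_eq d σ hσ]
  have h := map_withDensity (volume : Measure (EuclideanSpace ℝ (Fin d))) volume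
    R.toHomeomorph.toMeasurableEquiv R.measurePreserving (Dnorm d σ) (Dnorm_meas d σ)
  rw [show ⇑R = ⇑R.toHomeomorph.toMeasurableEquiv from rfl, h, ← isoGaussian_eq d σ hσ,
    isoGaussian_eq d σ hσ]
  congr 1
  funext ξ
  show Dnorm d σ (R.toHomeomorph.toMeasurableEquiv.symm ξ) = Dnorm d σ ξ
  have : ‖(R.toHomeomorph.toMeasurableEquiv.symm ξ : EuclideanSpace ℝ (Fin d))‖ = ‖ξ‖ := by
    show ‖R.symm ξ‖ = ‖ξ‖
    exact R.symm.norm_map ξ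
  rw [Dnorm, Dnorm, this]

end GaussAux
namespace GaussAux

lemma coord_meas {d : ℕ} (i₀ : Fin d) :
    Measurable (fun ξ : EuclideanSpace ℝ (Fin d) => ξ i₀) :=
  (measurable_pi_apply i₀).comp (MeasurableEquiv.toLp 2 (Fin d → ℝ)).symm.measurable

lemma isoGaussian_prob (d : ℕ) (σ : ℝ) : IsProbabilityMeasure (isoGaussian d σ) := by
  rw [isoGaussian]
  exact Measure.isProbabilityMeasure_map
    (MeasurableEquiv.toLp 2 (Fin d → ℝ)).measurable.aemeasurable

lemma isoGaussian_coord (d : ℕ) (σ : ℝ) (i₀ : Fin d) (t : Set ℝ) (ht : MeasurableSet t) :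
    isoGaussian d σ ((fun ξ => ξ i₀) ⁻¹' t) = gaussianReal 0 (Real.toNNReal (σ ^ 2)) t := by
  rw [isoGaussian, Measure.map_apply (MeasurableEquiv.toLp 2 (Fin d → ℝ)).measurable
    ((coord_meas i₀) ht)]
  have hpre : (MeasurableEquiv.toLp 2 (Fin d → ℝ)) ⁻¹' ((fun ξ => ξ i₀) ⁻¹' t)
      = Function.eval i₀ ⁻¹' t := rfl
  rw [hpre, Set.eval_preimage, Measure.pi_pi]
  rw [Finset.prod_eq_single i₀]
  · rw [Function.update_self]
  · intro j _ hj
    rw [Function.update_of_ne hj]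
    simp
  · intro h
    exact absurd (Finset.mem_univ i₀) h

end GaussAux
namespace GaussAux

lemma shift_est (d : ℕ) (σ : ℝ) (hσ : 0 < σ)
    (h : EuclideanSpace ℝ (Fin d) → ℝ) (hmeas : Measurable h)
    (hrange : ∀ z, h z ∈ Set.Icc (0 : ℝ) 1) (i₀ : Fin d) (a : ℝ) (ha : 0 < a) :
    ∫ ξ, h (EuclideanSpace.single i₀ a + ξ) ∂(isoGaussian d σ)
      - ∫ ξ, h ξ ∂(isoGaussian d σ) ≤ (Real.sqrt (2 * π * σ ^ 2))⁻¹ * a := by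
  haveI hprob : IsProbabilityMeasure (isoGaussian d σ) := isoGaussian_prob d σ
  set v : ℝ≥0 := Real.toNNReal (σ ^ 2) with hv_def
  have hv : v ≠ 0 := toNNReal_sq_ne_zero σ hσ
  have hvr : (v : ℝ) = σ ^ 2 := coe_toNNReal_sq σ hσ
  set γ := isoGaussian d σ with hγ
  set q : EuclideanSpace ℝ (Fin d) := EuclideanSpace.single i₀ a with hq
  set μ₁ := γ.map (fun ξ => q + ξ) with hμ₁
  haveI : IsProbabilityMeasure μ₁ :=
    Measure.isProbabilityMeasure_map (measurable_const_add q).aemeasurable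
  have hD₁meas : Measurable (fun ξ => Dnorm d σ (-q + ξ)) :=
    (Dnorm_meas d σ).comp (measurable_const_add (-q))
  have h1 : μ₁ = (volume : Measure (EuclideanSpace ℝ (Fin d))).withDensity
      (fun ξ => Dnorm d σ (-q + ξ)) := by
    have hmp : MeasurePreserving (fun ξ : EuclideanSpace ℝ (Fin d) => q + ξ) volume volume :=
      measurePreserving_add_left volume q
    rw [hμ₁, hγ, isoGaussian_eq d σ hσ]
    have hmw := map_withDensity (volume : Measure (EuclideanSpace ℝ (Fin d))) volume
      (Homeomorph.addLeft q).toMeasurableEquiv hmp (Dnorm d σ) (Dnorm_meas d σ)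
    rw [show (fun ξ : EuclideanSpace ℝ (Fin d) => q + ξ)
        = ⇑(Homeomorph.addLeft q).toMeasurableEquiv from rfl, hmw]
    rfl
  set S : Set (EuclideanSpace ℝ (Fin d)) := (fun ξ => ξ i₀) ⁻¹' Set.Ioi (a / 2) with hS_def
  have hS : MeasurableSet S := (coord_meas i₀) measurableSet_Ioi
  have hnormid : ∀ ξ : EuclideanSpace ℝ (Fin d),
      ‖-q + ξ‖ ^ 2 = ‖ξ‖ ^ 2 - 2 * (a * ξ i₀) + a ^ 2 := by
    intro ξ
    rw [neg_add_eq_sub, norm_sub_sq_real]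
    have hinner : (inner ℝ ξ q : ℝ) = a * ξ i₀ := by
      rw [hq]
      simpa using EuclideanSpace.inner_single_right (𝕜 := ℝ) i₀ a ξ
    have hnq : ‖q‖ ^ 2 = a ^ 2 := by
      rw [hq, EuclideanSpace.norm_single, Real.norm_eq_abs, sq_abs]
    rw [hinner, hnq]
  have hden : (0:ℝ) < 2 * σ ^ 2 := by positivity
  have hK : (0:ℝ) ≤ ((Real.sqrt (2 * π * σ ^ 2))⁻¹) ^ d := by positivity
  have hcmp₁ : ∀ ξ : EuclideanSpace ℝ (Fin d), ξ i₀ ≤ a / 2 →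
      Dnorm d σ (-q + ξ) ≤ Dnorm d σ ξ := by
    intro ξ hξ
    apply ENNReal.ofReal_le_ofReal
    apply mul_le_mul_of_nonneg_left _ hK
    apply Real.exp_le_exp.mpr
    apply (div_le_div_iff_of_pos_right hden).mpr
    nlinarith [hnormid ξ]
  have hcmp₂ : ∀ ξ : EuclideanSpace ℝ (Fin d), a / 2 ≤ ξ i₀ →
      Dnorm d σ ξ ≤ Dnorm d σ (-q + ξ) := by
    intro ξ hξ
    apply ENNReal.ofReal_le_ofReal
    apply mul_le_mul_of_nonneg_left _ hK
    apply Real.exp_le_exp.mpr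
    apply (div_le_div_iff_of_pos_right hden).mpr
    nlinarith [hnormid ξ]
  -- lintegral formulation
  have hHmeas : Measurable fun ξ : EuclideanSpace ℝ (Fin d) => ENNReal.ofReal (h ξ) :=
    ENNReal.measurable_ofReal.comp hmeas
  have hH1 : ∀ ξ : EuclideanSpace ℝ (Fin d), ENNReal.ofReal (h ξ) ≤ 1 := fun ξ => by
    rw [← ENNReal.ofReal_one]
    exact ENNReal.ofReal_le_ofReal (hrange ξ).2
  set A := ∫⁻ ξ, ENNReal.ofReal (h ξ) ∂μ₁ with hA_def
  set B := ∫⁻ ξ, ENNReal.ofReal (h ξ) ∂γ with hB_def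
  have hInt1 : ∫ ξ, h (q + ξ) ∂γ = A.toReal := by
    rw [hA_def, hμ₁, ← integral_map (measurable_const_add q).aemeasurable
      hmeas.aestronglyMeasurable]
    exact integral_eq_lintegral_of_nonneg_ae (ae_of_all _ fun ξ => (hrange _).1)
      hmeas.aestronglyMeasurable
  have hInt2 : ∫ ξ, h ξ ∂γ = B.toReal := by
    rw [hB_def, integral_eq_lintegral_of_nonneg_ae (ae_of_all _ fun ξ => (hrange _).1)
      hmeas.aestronglyMeasurable]
  have hA1 : A ≤ 1 := by
    calc A ≤ ∫⁻ _, 1 ∂μ₁ := lintegral_mono fun ξ => hH1 ξ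
    _ = 1 := by simp
  have hB1 : B ≤ 1 := by
    calc B ≤ ∫⁻ _, 1 ∂γ := lintegral_mono fun ξ => hH1 ξ
    _ = 1 := by simp
  set δ : ℝ≥0∞ := ENNReal.ofReal ((Real.sqrt (2 * π * σ ^ 2))⁻¹ * a) with hδ_def
  -- the measure of the slab bound
  have hslab : μ₁ S - γ S ≤ δ := by
    have hmapS : μ₁ S = γ ((fun ξ => ξ i₀) ⁻¹' Set.Ioi (-(a / 2))) := by
      rw [hμ₁, Measure.map_apply (measurable_const_add q) hS]
      congr 1
      ext ξ
      have hcoord : (q + ξ) i₀ = a + ξ i₀ := by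
        have : q i₀ = a := by rw [hq, EuclideanSpace.single_apply, if_pos rfl]
        show q i₀ + ξ i₀ = a + ξ i₀
        rw [this]
      simp only [Set.mem_preimage, Set.mem_Ioi, hS_def]
      rw [hcoord]
      constructor <;> intro hx <;> linarith
    rw [hmapS, hS_def, isoGaussian_coord d σ i₀ _ measurableSet_Ioi,
      isoGaussian_coord d σ i₀ _ measurableSet_Ioi]
    have hsplit : gaussianReal 0 v (Set.Ioi (-(a / 2)))
        = gaussianReal 0 v (Set.Ioc (-(a / 2)) (a / 2)) + gaussianReal 0 v (Set.Ioi (a / 2)) := by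
      rw [← measure_union (Set.Ioc_disjoint_Ioi le_rfl) measurableSet_Ioi,
        Set.Ioc_union_Ioi_eq_Ioi (by linarith)]
    rw [hsplit]
    have : gaussianReal 0 v (Set.Ioc (-(a / 2)) (a / 2)) + gaussianReal 0 v (Set.Ioi (a / 2))
        - gaussianReal 0 v (Set.Ioi (a / 2)) ≤ gaussianReal 0 v (Set.Ioc (-(a / 2)) (a / 2)) :=
      tsub_le_iff_right.mpr le_rfl
    refine this.trans ?_
    -- bound the Ioc measure by sup-density times length
    rw [gaussianReal_apply 0 hv]
    calc ∫⁻ x in Set.Ioc (-(a / 2)) (a / 2), gaussianPDF 0 v x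
        ≤ ∫⁻ _ in Set.Ioc (-(a / 2)) (a / 2), ENNReal.ofReal ((Real.sqrt (2 * π * σ ^ 2))⁻¹) := by
          refine setLIntegral_mono measurable_const fun x _ => ?_
          apply ENNReal.ofReal_le_ofReal
          rw [gaussianPDFReal, hvr]
          calc (Real.sqrt (2 * π * σ ^ 2))⁻¹ * Real.exp (-(x - 0) ^ 2 / (2 * σ ^ 2))
              ≤ (Real.sqrt (2 * π * σ ^ 2))⁻¹ * 1 := by
                apply mul_le_mul_of_nonneg_left _ (by positivity)
                apply Real.exp_le_one_iff.mpr
                exact div_nonpos_of_nonpos_of_nonneg (neg_nonpos.mpr (sq_nonneg _))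
                  (by positivity)
            _ = (Real.sqrt (2 * π * σ ^ 2))⁻¹ := mul_one _
      _ = ENNReal.ofReal ((Real.sqrt (2 * π * σ ^ 2))⁻¹) * volume (Set.Ioc (-(a / 2)) (a / 2)) :=
          setLIntegral_const _ _
      _ = δ := by
          rw [Real.volume_Ioc]
          have harg : a / 2 - -(a / 2) = a := by ring
          rw [harg, hδ_def,
            ← ENNReal.ofReal_mul (by positivity : (0:ℝ) ≤ (Real.sqrt (2 * π * σ ^ 2))⁻¹)]
  -- key inequality A ≤ B + δ
  have key : A ≤ B + δ := by
    have hA' : A = ∫⁻ ξ, Dnorm d σ (-q + ξ) * ENNReal.ofReal (h ξ) ∂volume := by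
      rw [hA_def, h1, lintegral_withDensity_eq_lintegral_mul _ hD₁meas hHmeas]
      rfl
    have hB' : B = ∫⁻ ξ, Dnorm d σ ξ * ENNReal.ofReal (h ξ) ∂volume := by
      rw [hB_def, hγ, isoGaussian_eq d σ hσ,
        lintegral_withDensity_eq_lintegral_mul _ (Dnorm_meas d σ) hHmeas]
      rfl
    have hΔ : (∫⁻ ξ, (Dnorm d σ (-q + ξ) - Dnorm d σ ξ) ∂volume) ≤ δ := by
      have hind : (fun ξ : EuclideanSpace ℝ (Fin d) => Dnorm d σ (-q + ξ) - Dnorm d σ ξ)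
          = S.indicator (fun ξ => Dnorm d σ (-q + ξ) - Dnorm d σ ξ) := by
        funext ξ
        by_cases hξ : ξ ∈ S
        · rw [Set.indicator_of_mem hξ]
        · rw [Set.indicator_of_notMem hξ, tsub_eq_zero_of_le]
          exact hcmp₁ ξ (by simpa [hS_def, not_lt] using hξ)
      rw [hind, lintegral_indicator hS]
      have hfin : (∫⁻ ξ in S, Dnorm d σ ξ ∂volume) ≠ ⊤ := by
        have : (∫⁻ ξ in S, Dnorm d σ ξ ∂volume) = γ S := by
          rw [hγ, isoGaussian_eq d σ hσ, withDensity_apply _ hS]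
        rw [this]
        exact (measure_lt_top γ S).ne
      rw [lintegral_sub (Dnorm_meas d σ) hfin
        ((ae_restrict_iff' hS).mpr (ae_of_all _ fun ξ hξ =>
          hcmp₂ ξ (le_of_lt (by simpa [hS_def] using hξ))))]
      have hμ₁S : (∫⁻ ξ in S, Dnorm d σ (-q + ξ) ∂volume) = μ₁ S := by
        rw [h1, withDensity_apply _ hS]
      have hγS : (∫⁻ ξ in S, Dnorm d σ ξ ∂volume) = γ S := by
        rw [hγ, isoGaussian_eq d σ hσ, withDensity_apply _ hS]
      rw [hμ₁S, hγS]
      exact hslab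
    calc A = ∫⁻ ξ, Dnorm d σ (-q + ξ) * ENNReal.ofReal (h ξ) ∂volume := hA'
      _ ≤ ∫⁻ ξ, (Dnorm d σ ξ * ENNReal.ofReal (h ξ)
            + (Dnorm d σ (-q + ξ) - Dnorm d σ ξ)) ∂volume := by
          refine lintegral_mono fun ξ => ?_
          calc Dnorm d σ (-q + ξ) * ENNReal.ofReal (h ξ)
              ≤ (Dnorm d σ ξ + (Dnorm d σ (-q + ξ) - Dnorm d σ ξ)) * ENNReal.ofReal (h ξ) :=
                mul_le_mul_left le_add_tsub _
            _ = Dnorm d σ ξ * ENNReal.ofReal (h ξ)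
                + (Dnorm d σ (-q + ξ) - Dnorm d σ ξ) * ENNReal.ofReal (h ξ) := add_mul _ _ _
            _ ≤ Dnorm d σ ξ * ENNReal.ofReal (h ξ)
                + (Dnorm d σ (-q + ξ) - Dnorm d σ ξ) * 1 :=
                add_le_add_right (mul_le_mul_right (hH1 ξ) _) _
            _ = Dnorm d σ ξ * ENNReal.ofReal (h ξ)
                + (Dnorm d σ (-q + ξ) - Dnorm d σ ξ) := by rw [mul_one]
      _ = (∫⁻ ξ, Dnorm d σ ξ * ENNReal.ofReal (h ξ) ∂volume)
            + ∫⁻ ξ, (Dnorm d σ (-q + ξ) - Dnorm d σ ξ) ∂volume :=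
          lintegral_add_right _ (hD₁meas.sub (Dnorm_meas d σ))
      _ ≤ B + δ := by rw [hB']; exact add_le_add_right hΔ _
  -- conclude
  rw [hq] at hInt1 ⊢
  rw [hInt1, hInt2]
  have hδfin : δ ≠ ⊤ := ENNReal.ofReal_ne_top
  have hBfin : B ≠ ⊤ := (hB1.trans_lt ENNReal.one_lt_top).ne
  have htR : A.toReal ≤ B.toReal + δ.toReal := by
    have h2 : A.toReal ≤ (B + δ).toReal :=
      ENNReal.toReal_mono (by finiteness) key
    rwa [ENNReal.toReal_add hBfin hδfin] at h2
  have hδR : δ.toReal = (Real.sqrt (2 * π * σ ^ 2))⁻¹ * a :=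
    ENNReal.toReal_ofReal (by positivity)
  linarith

end GaussAux
namespace GaussAux

lemma const_le (σ : ℝ) (hσ : 0 < σ) :
    (Real.sqrt (2 * π * σ ^ 2))⁻¹ ≤ Real.sqrt (2 / (π * σ ^ 2)) := by
  rw [← Real.sqrt_inv]
  apply Real.sqrt_le_sqrt
  rw [inv_eq_one_div, div_le_div_iff₀ (by positivity) (by positivity)]
  nlinarith [mul_pos Real.pi_pos (pow_pos hσ 2)]

lemma smooth_est (d : ℕ) (σ : ℝ) (hσ : 0 < σ)
    (g : EuclideanSpace ℝ (Fin d) → ℝ) (hgmeas : Measurable g)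
    (hgrange : ∀ z, g z ∈ Set.Icc (0 : ℝ) 1) (w : EuclideanSpace ℝ (Fin d)) :
    ∫ ξ, g (w + ξ) ∂(isoGaussian d σ) - ∫ ξ, g ξ ∂(isoGaussian d σ)
      ≤ Real.sqrt (2 / (π * σ ^ 2)) * ‖w‖ := by
  rcases eq_or_ne w 0 with hw | hw
  · rw [hw]
    simp only [zero_add, sub_self, norm_zero, mul_zero, le_refl]
  · have hd : 0 < d := by
      rcases Nat.eq_zero_or_pos d with hd0 | hd
      · subst hd0
        refine absurd ?_ hw
        ext i
        exact i.elim0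
      · exact hd
    set i₀ : Fin d := ⟨0, hd⟩ with hi₀
    set a : ℝ := ‖w‖ with ha_def
    have ha : 0 < a := norm_pos_iff.mpr hw
    set u : EuclideanSpace ℝ (Fin d) := a⁻¹ • w with hu_def
    have hu : ‖u‖ = 1 := norm_smul_inv_norm hw
    have horth : Orthonormal ℝ (({i₀} : Set (Fin d)).restrict (fun _ => u)) := by
      constructor
      · intro i
        exact hu
      · intro i j hij
        exact absurd (Subtype.ext (i.2.trans j.2.symm)) hij
    have hcard : Module.finrank ℝ (EuclideanSpace ℝ (Fin d)) = Fintype.card (Fin d) := by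
      simp [finrank_euclideanSpace_fin]
    obtain ⟨b, hb⟩ := horth.exists_orthonormalBasis_extension_of_card_eq hcard
    have hbi₀ : b i₀ = u := hb i₀ rfl
    set R : EuclideanSpace ℝ (Fin d) ≃ₗᵢ[ℝ] EuclideanSpace ℝ (Fin d) := b.repr.symm with hR
    have hsingle : EuclideanSpace.single i₀ a = a • EuclideanSpace.single i₀ (1:ℝ) := by
      ext j
      simp [EuclideanSpace.single_apply, PiLp.smul_apply, smul_eq_mul, mul_ite]
    have hRw : R (EuclideanSpace.single i₀ a) = w := by
      rw [hsingle, LinearIsometryEquiv.map_smul, hR, b.repr_symm_single, hbi₀, hu_def, smul_smul,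
        mul_inv_cancel₀ ha.ne', one_smul]
    have hrot := isoGaussian_map_rot d σ hσ R
    have hRmeas : Measurable (⇑R) := R.continuous.measurable
    have hmg : Measurable (fun ξ => g (R ξ)) := hgmeas.comp hRmeas
    have e1 : ∫ ξ, g (w + ξ) ∂(isoGaussian d σ)
        = ∫ ξ, g (R (EuclideanSpace.single i₀ a + ξ)) ∂(isoGaussian d σ) := by
      conv_lhs => rw [← hrot]
      rw [integral_map hRmeas.aemeasurable
        (show Measurable (fun ξ => g (w + ξ)) from
          hgmeas.comp (measurable_const_add w)).aestronglyMeasurable]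
      congr 1
      funext ξ
      rw [map_add, hRw]
    have e2 : ∫ ξ, g ξ ∂(isoGaussian d σ) = ∫ ξ, g (R ξ) ∂(isoGaussian d σ) := by
      conv_lhs => rw [← hrot]
      rw [integral_map hRmeas.aemeasurable hgmeas.aestronglyMeasurable]
    rw [e1, e2]
    have hse := shift_est d σ hσ (fun ξ => g (R ξ)) hmg (fun z => hgrange _) i₀ a ha
    refine le_trans hse ?_
    exact mul_le_mul_of_nonneg_right (const_le σ hσ) ha.le

end GaussAux

/-- **Gaussian smoothing of a `[0,1]`-valued function is `√(2/(πσ²))`-Lipschitz**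
with respect to the Euclidean (`ℓ₂`) norm. -/
theorem gaussian_smoothing_lipschitz
    {d : ℕ} (σ : ℝ) (hσ : 0 < σ)
    (f : EuclideanSpace ℝ (Fin d) → ℝ) (hf_meas : Measurable f)
    (hf_range : ∀ z, f z ∈ Set.Icc (0 : ℝ) 1)
    (fhat : EuclideanSpace ℝ (Fin d) → ℝ)
    (hfhat : ∀ x, fhat x = ∫ ξ, f (x + ξ) ∂(isoGaussian d σ)) :
    ∀ x x' : EuclideanSpace ℝ (Fin d),
      |fhat x' - fhat x| ≤ Real.sqrt (2 / (Real.pi * σ ^ 2)) * ‖x' - x‖ := by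
  intro x x'
  refine abs_sub_le_iff.mpr ⟨?_, ?_⟩
  · rw [hfhat x', hfhat x]
    have hest := GaussAux.smooth_est d σ hσ (fun z => f (x + z))
      (hf_meas.comp (measurable_const_add x)) (fun z => hf_range _) (x' - x)
    have heq : (fun ξ => f (x' + ξ)) = fun ξ => f (x + ((x' - x) + ξ)) := by
      funext ξ
      congr 1
      abel
    rw [heq]
    exact hest
  · rw [hfhat x', hfhat x]
    have hest := GaussAux.smooth_est d σ hσ (fun z => f (x' + z))
      (hf_meas.comp (measurable_const_add x')) (fun z => hf_range _) (x - x')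
    have heq : (fun ξ => f (x + ξ)) = fun ξ => f (x' + ((x - x') + ξ)) := by
      funext ξ
      congr 1
      abel
    rw [heq, show ‖x' - x‖ = ‖x - x'‖ from norm_sub_rev _ _]
    exact hest
end

section
/- Let c ≥ 2, σ > 0, and let h̄ : ℝ^d → ℝ^c be measurable with 0 ≤ h̄_i(z) ≤ 1 for all z and i. Define the randomized smoothing classifier h(x) = E_{ξ ∼ N(0, σ²I_d)}[h̄(x+ξ)] (componentwise), and assume 0 < h_i(x) < 1 for all x and i. Fix x ∈ ℝ^d, let y satisfy h_y(x) ≥ h_i(x) for all i, let y' ≠ y satisfy h_{y'}(x) ≥ h_i(x) for all i ≠ y, and let α ∈ [1/2, 1] be such that α·h_y(x) ∈ (0,1) and α·h_{y'}(x) + 1 − α ∈ (0,1). Set r_σ^α(x) = (σ/2)·(Φ⁻¹(α·h_y(x)) − Φ⁻¹(α·h_{y'}(x) + 1 − α)). Then h is certifiably robust at x with margin (1−α)/α and radius r_σ^α(x): for every δ ∈ ℝ^d with ‖δ‖₂ ≤ r_σ^α(x) and every i ≠ y, h_y(x+δ) ≥ h_i(x+δ) + (1−α)/α. -/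
open MeasureTheory ProbabilityTheory
open Real Set Filter
open scoped NNReal ENNReal

/-- The standard normal cumulative distribution function `Φ`. -/
noncomputable def stdNormalCDF : ℝ → ℝ :=
  fun t => ProbabilityTheory.cdf (gaussianReal 0 1) t

/-- `Φ⁻¹`, the inverse of the standard normal CDF on `(0, 1)`. -/
noncomputable def stdNormalCDFInv : ℝ → ℝ :=
  Function.invFun stdNormalCDF


namespace RS


lemma stdNormalCDF_eq (t : ℝ) :
    stdNormalCDF t = (gaussianReal 0 1 (Iic t)).toReal := by
  rw [stdNormalCDF, cdf_eq_real, measureReal_def]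

lemma gaussianReal_Iic (t : ℝ) :
    gaussianReal 0 1 (Iic t) = ENNReal.ofReal (∫ x in Iic t, gaussianPDFReal 0 1 x) :=
  gaussianReal_apply_eq_integral 0 one_ne_zero (Iic t)

lemma stdNormalCDF_eq_integral (t : ℝ) :
    stdNormalCDF t = ∫ x in Iic t, gaussianPDFReal 0 1 x := by
  rw [stdNormalCDF_eq, gaussianReal_Iic, ENNReal.toReal_ofReal]
  exact setIntegral_nonneg measurableSet_Iic fun x _ => gaussianPDFReal_nonneg _ _ _

lemma stdNormalCDF_strictMono : StrictMono stdNormalCDF := by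
  intro s t hst
  rw [stdNormalCDF_eq_integral, stdNormalCDF_eq_integral]
  have hint : IntegrableOn (gaussianPDFReal 0 1) (Iic t) volume :=
    (integrable_gaussianPDFReal 0 1).integrableOn
  have hints : IntegrableOn (gaussianPDFReal 0 1) (Iic s) volume :=
    (integrable_gaussianPDFReal 0 1).integrableOn
  have hIoc : IntegrableOn (gaussianPDFReal 0 1) (Ioc s t) volume :=
    (integrable_gaussianPDFReal 0 1).integrableOn
  have hsplit : Iic t = Iic s ∪ Ioc s t := (Set.Iic_union_Ioc_eq_Iic hst.le).symm
  rw [hsplit, setIntegral_union (Set.Iic_disjoint_Ioc le_rfl) measurableSet_Ioc hints hIoc]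
  have hpos : 0 < ∫ x in Ioc s t, gaussianPDFReal 0 1 x := by
    rw [setIntegral_pos_iff_support_of_nonneg_ae
      (Filter.Eventually.of_forall fun x => gaussianPDFReal_nonneg _ _ _) hIoc]
    have hsupp : Function.support (gaussianPDFReal 0 1) = Set.univ := by
      ext x; simp [Function.mem_support, (gaussianPDFReal_pos 0 1 x one_ne_zero).ne']
    rw [hsupp, Set.univ_inter, Real.volume_Ioc]
    simp [ENNReal.ofReal_pos, sub_pos.mpr hst]
  have hnn : 0 ≤ ∫ x in Iic s, gaussianPDFReal 0 1 x :=
    setIntegral_nonneg measurableSet_Iic fun x _ => gaussianPDFReal_nonneg _ _ _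
  linarith

lemma stdNormalCDF_continuous : Continuous stdNormalCDF := by
  have hii : ∀ a b : ℝ, IntervalIntegrable (gaussianPDFReal 0 1) volume a b :=
    fun a b => (integrable_gaussianPDFReal 0 1).intervalIntegrable
  have key : ∀ t : ℝ, stdNormalCDF t = stdNormalCDF 0 + ∫ x in (0:ℝ)..t, gaussianPDFReal 0 1 x := by
    intro t
    have hdiff : ∀ a b : ℝ, a ≤ b →
        stdNormalCDF b - stdNormalCDF a = ∫ x in a..b, gaussianPDFReal 0 1 x := by
      intro a b hab
      rw [intervalIntegral.integral_of_le hab, stdNormalCDF_eq_integral, stdNormalCDF_eq_integral]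
      have hsplit : Iic b = Iic a ∪ Ioc a b := (Set.Iic_union_Ioc_eq_Iic hab).symm
      rw [hsplit, setIntegral_union (Set.Iic_disjoint_Ioc le_rfl) measurableSet_Ioc
        (integrable_gaussianPDFReal 0 1).integrableOn (integrable_gaussianPDFReal 0 1).integrableOn]
      ring
    rcases le_total 0 t with ht | ht
    · rw [← hdiff 0 t ht]; ring
    · rw [intervalIntegral.integral_symm, ← hdiff t 0 ht]; ring
  have : stdNormalCDF = fun t => stdNormalCDF 0 + ∫ x in (0:ℝ)..t, gaussianPDFReal 0 1 x :=
    funext key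
  rw [this]
  exact continuous_const.add (intervalIntegral.continuous_primitive hii 0)

lemma stdNormalCDF_mem_Ioo (t : ℝ) : stdNormalCDF t ∈ Set.Ioo (0:ℝ) 1 := by
  constructor
  · have h1 : (0:ℝ) ≤ stdNormalCDF (t - 1) := cdf_nonneg (gaussianReal 0 1) _
    have := stdNormalCDF_strictMono (show t - 1 < t by linarith)
    linarith
  · have h1 : stdNormalCDF (t + 1) ≤ 1 := cdf_le_one (gaussianReal 0 1) _
    have := stdNormalCDF_strictMono (show t < t + 1 by linarith)
    linarith

lemma stdNormalCDF_surj {p : ℝ} (hp : p ∈ Set.Ioo (0:ℝ) 1) : ∃ t, stdNormalCDF t = p := by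
  obtain ⟨a, ha⟩ : ∃ a, stdNormalCDF a < p := by
    have := (tendsto_cdf_atBot (μ := gaussianReal 0 1)).eventually_lt_const hp.1
    obtain ⟨a, ha⟩ := this.exists
    exact ⟨a, ha⟩
  obtain ⟨b, hb⟩ : ∃ b, p < stdNormalCDF b := by
    have := (tendsto_cdf_atTop (μ := gaussianReal 0 1)).eventually_const_lt hp.2
    obtain ⟨b, hb⟩ := this.exists
    exact ⟨b, hb⟩
  have hab : a ≤ b := by
    by_contra hab
    exact absurd (stdNormalCDF_strictMono (lt_of_not_ge hab)) (by linarith)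
  have := intermediate_value_Icc hab stdNormalCDF_continuous.continuousOn
  obtain ⟨t, _, ht⟩ := this ⟨ha.le, hb.le⟩
  exact ⟨t, ht⟩

lemma stdNormalCDF_invFun {p : ℝ} (hp : p ∈ Set.Ioo (0:ℝ) 1) :
    stdNormalCDF (stdNormalCDFInv p) = p :=
  Function.invFun_eq (stdNormalCDF_surj hp)

lemma stdNormalCDFInv_le_invFun {p q : ℝ} (hp : p ∈ Set.Ioo (0:ℝ) 1) (hq : q ∈ Set.Ioo (0:ℝ) 1)
    (hpq : p ≤ q) : stdNormalCDFInv p ≤ stdNormalCDFInv q := by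
  rw [← stdNormalCDF_strictMono.le_iff_le, stdNormalCDF_invFun hp, stdNormalCDF_invFun hq]
  exact hpq

lemma stdNormalCDFInv_stdNormalCDF (t : ℝ) : stdNormalCDFInv (stdNormalCDF t) = t :=
  Function.leftInverse_invFun stdNormalCDF_strictMono.injective t

lemma stdNormalCDF_neg (t : ℝ) : stdNormalCDF (-t) = 1 - stdNormalCDF t := by
  have hmap : Measure.map (fun x => (-1 : ℝ) * x) (gaussianReal 0 1) = gaussianReal 0 1 := by
    rw [gaussianReal_map_const_mul]
    norm_num
  have hsingleton : gaussianReal 0 1 {t} = 0 :=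
    gaussianReal_absolutelyContinuous 0 one_ne_zero (volume_singleton)
  have h1 : gaussianReal 0 1 (Iic (-t)) = gaussianReal 0 1 (Ici t) := by
    conv_lhs => rw [← hmap]
    rw [Measure.map_apply (by fun_prop) measurableSet_Iic]
    congr 1
    ext x
    simp only [Set.mem_preimage, Set.mem_Iic, Set.mem_Ici]
    constructor <;> intro hx <;> linarith
  have h2 : gaussianReal 0 1 (Ici t) = 1 - gaussianReal 0 1 (Iic t) := by
    have hIio : gaussianReal 0 1 (Iio t) = gaussianReal 0 1 (Iic t) := by
      have : Iic t = Iio t ∪ {t} := by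
        ext x; simp [le_iff_lt_or_eq]
      rw [this]
      refine le_antisymm (measure_mono Set.subset_union_left) ?_
      calc gaussianReal 0 1 (Iio t ∪ {t}) ≤ gaussianReal 0 1 (Iio t) + gaussianReal 0 1 {t} :=
            measure_union_le _ _
        _ = gaussianReal 0 1 (Iio t) := by rw [hsingleton, add_zero]
    rw [← hIio, ← Set.compl_Iio]
    rw [measure_compl measurableSet_Iio (measure_ne_top _ _), measure_univ]
  rw [stdNormalCDF_eq, stdNormalCDF_eq, h1, h2, ENNReal.toReal_sub_of_le]
  · simp
  · exact prob_le_one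
  · exact ENNReal.one_ne_top

lemma stdNormalCDFInv_one_sub {p : ℝ} (hp : p ∈ Set.Ioo (0:ℝ) 1) :
    stdNormalCDFInv (1 - p) = - stdNormalCDFInv p := by
  have h1 : stdNormalCDF (- stdNormalCDFInv p) = 1 - p := by
    rw [stdNormalCDF_neg, stdNormalCDF_invFun hp]
  rw [← h1, stdNormalCDFInv_stdNormalCDF]

/-- CDF of a centered Gaussian with standard deviation `s`. -/
lemma gaussianReal_Iic_eq (s : ℝ) (hs : 0 < s) (t : ℝ) :
    gaussianReal 0 (Real.toNNReal (s^2)) (Iic t) = ENNReal.ofReal (stdNormalCDF (t / s)) := by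
  have hmap : Measure.map (fun x => s * x) (gaussianReal 0 1) =
      gaussianReal 0 (Real.toNNReal (s^2)) := by
    rw [gaussianReal_map_const_mul]
    congr 1
    · ring
    · ext
      simp [Real.toNNReal, max_eq_left (sq_nonneg s)]
  rw [← hmap, Measure.map_apply (by fun_prop) measurableSet_Iic]
  have : (fun x => s * x) ⁻¹' Iic t = Iic (t / s) := by
    ext x
    simp only [Set.mem_preimage, Set.mem_Iic]
    rw [le_div_iff₀ hs, mul_comm]
  rw [this]
  rw [show stdNormalCDF (t/s) = (cdf (gaussianReal 0 1)) (t/s) from rfl, ofReal_cdf]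


/-! ### 1-d Cameron-Martin -/

lemma gaussianPDFReal_ratio (v : ℝ≥0) (hv : v ≠ 0) (m t : ℝ) :
    gaussianPDFReal m v t =
      gaussianPDFReal 0 v t * Real.exp (m * t / v - m ^ 2 / (2 * v)) := by
  have hV : (0:ℝ) < v := by positivity
  show (Real.sqrt (2 * Real.pi * v))⁻¹ * Real.exp (-(t - m)^2 / (2 * v)) =
    ((Real.sqrt (2 * Real.pi * v))⁻¹ * Real.exp (-(t - 0)^2 / (2 * v))) *
      Real.exp (m * t / v - m ^ 2 / (2 * v))
  have he : Real.exp (-(t - 0) ^ 2 / (2 * (v:ℝ))) * Real.exp (m * t / v - m ^ 2 / (2 * v)) =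
      Real.exp (-(t - m) ^ 2 / (2 * (v:ℝ))) := by
    rw [← Real.exp_add]
    congr 1
    field_simp
    ring
  conv_rhs => rw [mul_assoc, he]

lemma gaussianPDF_ratio (v : ℝ≥0) (hv : v ≠ 0) (m t : ℝ) :
    gaussianPDF m v t =
      gaussianPDF 0 v t * ENNReal.ofReal (Real.exp (m * t / v - m ^ 2 / (2 * v))) := by
  rw [gaussianPDF, gaussianPDF, gaussianPDFReal_ratio v hv m t,
    ENNReal.ofReal_mul (gaussianPDFReal_nonneg 0 v t)]

lemma lintegral_gaussian_shift (v : ℝ≥0) (hv : v ≠ 0) (m : ℝ) {F : ℝ → ℝ≥0∞}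
    (hF : Measurable F) :
    ∫⁻ t, F (t + m) ∂(gaussianReal 0 v) =
      ∫⁻ t, F t * ENNReal.ofReal (Real.exp (m * t / v - m ^ 2 / (2 * v)))
        ∂(gaussianReal 0 v) := by
  have h1 : ∫⁻ t, F (t + m) ∂(gaussianReal 0 v) = ∫⁻ t, F t ∂(gaussianReal m v) := by
    rw [show gaussianReal m v = gaussianReal (0 + m) v by rw [zero_add],
      ← gaussianReal_map_add_const m, lintegral_map hF (measurable_add_const m)]
  rw [h1, gaussianReal_of_var_ne_zero m hv, gaussianReal_of_var_ne_zero 0 hv,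
    lintegral_withDensity_eq_lintegral_mul _ (measurable_gaussianPDF m v) hF,
    lintegral_withDensity_eq_lintegral_mul _ (measurable_gaussianPDF 0 v)
      (by fun_prop :
        Measurable fun t => F t * ENNReal.ofReal (Real.exp (m * t / v - m ^ 2 / (2 * v))))]
  refine lintegral_congr fun t => ?_
  simp only [Pi.mul_apply]
  rw [gaussianPDF_ratio v hv m t]
  ring

/-! ### Convolution of Gaussians -/

lemma gaussianPDFReal_conv (v1 v2 : ℝ≥0) (h1 : v1 ≠ 0) (h2 : v2 ≠ 0) (t : ℝ) :
    ∫ s, gaussianPDFReal 0 v1 s * gaussianPDFReal 0 v2 (t - s) =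
      gaussianPDFReal 0 (v1 + v2) t := by
  have hV1 : (0:ℝ) < v1 := by positivity
  have hV2 : (0:ℝ) < v2 := by positivity
  have hV : (0:ℝ) < (v1:ℝ) + v2 := by linarith
  set b : ℝ := ((v1:ℝ) + v2) / (2 * v1 * v2) with hb_def
  have hb : 0 < b := by positivity
  set mm : ℝ := (v1:ℝ) * t / ((v1:ℝ) + v2) with hm_def
  have key : ∀ s : ℝ, gaussianPDFReal 0 v1 s * gaussianPDFReal 0 v2 (t - s) =
      ((Real.sqrt (2 * Real.pi * v1))⁻¹ * (Real.sqrt (2 * Real.pi * v2))⁻¹ *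
        Real.exp (-t ^ 2 / (2 * ((v1:ℝ) + v2)))) * Real.exp (-b * (s - mm) ^ 2) := by
    intro s
    show ((Real.sqrt (2 * Real.pi * v1))⁻¹ * Real.exp (-(s - 0)^2 / (2 * v1))) *
        ((Real.sqrt (2 * Real.pi * v2))⁻¹ * Real.exp (-(t - s - 0)^2 / (2 * v2))) = _
    have he : Real.exp (-(s - 0) ^ 2 / (2 * (v1:ℝ))) * Real.exp (-(t - s - 0) ^ 2 / (2 * (v2:ℝ))) =
        Real.exp (-t ^ 2 / (2 * ((v1:ℝ) + v2))) * Real.exp (-b * (s - mm) ^ 2) := by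
      rw [← Real.exp_add, ← Real.exp_add]
      congr 1
      rw [hm_def, hb_def]
      field_simp
      ring
    calc ((Real.sqrt (2 * Real.pi * (v1:ℝ)))⁻¹ * Real.exp (-(s - 0)^2 / (2 * (v1:ℝ)))) *
        ((Real.sqrt (2 * Real.pi * (v2:ℝ)))⁻¹ * Real.exp (-(t - s - 0)^2 / (2 * (v2:ℝ))))
        = ((Real.sqrt (2 * Real.pi * (v1:ℝ)))⁻¹ * (Real.sqrt (2 * Real.pi * (v2:ℝ)))⁻¹) *
          (Real.exp (-(s - 0) ^ 2 / (2 * (v1:ℝ))) * Real.exp (-(t - s - 0) ^ 2 / (2 * (v2:ℝ)))) := by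
          ring
      _ = ((Real.sqrt (2 * Real.pi * (v1:ℝ)))⁻¹ * (Real.sqrt (2 * Real.pi * (v2:ℝ)))⁻¹) *
          (Real.exp (-t ^ 2 / (2 * ((v1:ℝ) + v2))) * Real.exp (-b * (s - mm) ^ 2)) := by rw [he]
      _ = _ := by ring
  rw [funext key, integral_const_mul]
  have hshift : ∫ s : ℝ, Real.exp (-b * (s - mm) ^ 2) = ∫ s : ℝ, Real.exp (-b * s ^ 2) :=
    integral_sub_right_eq_self (fun s => Real.exp (-b * s ^ 2)) mm
  rw [hshift, integral_gaussian b]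
  show _ = (Real.sqrt (2 * Real.pi * ((v1 + v2 : ℝ≥0) : ℝ)))⁻¹ *
    Real.exp (-(t - 0)^2 / (2 * ((v1 + v2 : ℝ≥0) : ℝ)))
  rw [NNReal.coe_add]
  have hsq : (Real.sqrt (2 * Real.pi * v1))⁻¹ * (Real.sqrt (2 * Real.pi * v2))⁻¹ *
      Real.sqrt (Real.pi / b) = (Real.sqrt (2 * Real.pi * ((v1:ℝ) + v2)))⁻¹ := by
    rw [← Real.sqrt_inv, ← Real.sqrt_inv, ← Real.sqrt_mul (by positivity),
      ← Real.sqrt_mul (by positivity)]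
    congr 1
    rw [hb_def]
    have hpi := Real.pi_pos
    field_simp
    ring
    rw [← Real.sqrt_mul (by positivity), inv_mul_cancel₀ (ne_of_gt (by nlinarith [Real.pi_pos, hV1, hV2])), Real.sqrt_one]
  calc ((Real.sqrt (2 * Real.pi * v1))⁻¹ * (Real.sqrt (2 * Real.pi * v2))⁻¹ *
        Real.exp (-t ^ 2 / (2 * ((v1:ℝ) + v2)))) * Real.sqrt (Real.pi / b)
      = ((Real.sqrt (2 * Real.pi * v1))⁻¹ * (Real.sqrt (2 * Real.pi * v2))⁻¹ *
        Real.sqrt (Real.pi / b)) * Real.exp (-t ^ 2 / (2 * ((v1:ℝ) + v2))) := by ring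
    _ = (Real.sqrt (2 * Real.pi * ((v1:ℝ) + v2)))⁻¹ *
        Real.exp (-(t - 0) ^ 2 / (2 * ((v1:ℝ) + v2))) := by rw [hsq]; ring_nf


lemma gaussianPDFReal_le (v : ℝ≥0) (t : ℝ) :
    gaussianPDFReal 0 v t ≤ (Real.sqrt (2 * Real.pi * v))⁻¹ := by
  show (Real.sqrt (2 * Real.pi * v))⁻¹ * Real.exp (-(t - 0)^2 / (2 * v)) ≤ _
  have h1 : Real.exp (-(t - 0)^2 / (2 * (v:ℝ))) ≤ 1 := by
    rw [Real.exp_le_one_iff]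
    rcases eq_or_ne v 0 with hv | hv
    · simp [hv]
    · have : (0:ℝ) < v := by positivity
      have h3 : 0 ≤ (t - 0)^2 / (2 * (v:ℝ)) := by positivity
      calc -(t-0)^2/(2*(v:ℝ)) = -((t-0)^2/(2*(v:ℝ))) := by ring
        _ ≤ 0 := neg_nonpos.mpr h3
  have h0 : (0:ℝ) ≤ (Real.sqrt (2 * Real.pi * v))⁻¹ := by positivity
  calc (Real.sqrt (2 * Real.pi * v))⁻¹ * Real.exp (-(t - 0)^2 / (2 * v))
      ≤ (Real.sqrt (2 * Real.pi * v))⁻¹ * 1 := by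
        exact mul_le_mul_of_nonneg_left h1 h0
    _ = _ := mul_one _

lemma gaussianReal_conv (v1 v2 : ℝ≥0) :
    ((gaussianReal 0 v1).prod (gaussianReal 0 v2)).map (fun p : ℝ × ℝ => p.1 + p.2) =
      gaussianReal 0 (v1 + v2) := by
  have hadd : Measurable (fun p : ℝ × ℝ => p.1 + p.2) := measurable_fst.add measurable_snd
  rcases eq_or_ne v1 0 with h1 | h1
  · subst h1
    rw [gaussianReal_zero_var, Measure.dirac_prod, Measure.map_map hadd (by fun_prop),
      zero_add]
    have : ((fun p : ℝ × ℝ => p.1 + p.2) ∘ fun y => ((0:ℝ), y)) = fun y => (0:ℝ) + y := rfl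
    rw [this]
    simpa using gaussianReal_map_const_add (μ := 0) (v := v2) 0
  rcases eq_or_ne v2 0 with h2 | h2
  · subst h2
    rw [gaussianReal_zero_var, Measure.prod_dirac, Measure.map_map hadd (by fun_prop),
      add_zero]
    have : ((fun p : ℝ × ℝ => p.1 + p.2) ∘ fun x => (x, (0:ℝ))) = fun x => x + (0:ℝ) := rfl
    rw [this]
    simpa using gaussianReal_map_add_const (μ := 0) (v := v1) 0
  -- main case
  have hk : Measurable (Function.uncurry fun x t : ℝ => gaussianPDF 0 v1 x * gaussianPDF x v2 t) := by
    change Measurable fun p : ℝ × ℝ => gaussianPDF 0 v1 p.1 * gaussianPDF p.1 v2 p.2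
    apply Measurable.fun_mul
    · exact (measurable_gaussianPDF 0 v1).comp measurable_fst
    · unfold gaussianPDF gaussianPDFReal
      fun_prop
  refine Measure.ext fun A hA => ?_
  rw [Measure.map_apply hadd hA, Measure.prod_apply (hadd hA)]
  have step1 : ∀ x : ℝ, gaussianReal 0 v2 (Prod.mk x ⁻¹' ((fun p : ℝ × ℝ => p.1 + p.2) ⁻¹' A)) =
      ∫⁻ t in A, gaussianPDF x v2 t := by
    intro x
    have hpre : Prod.mk x ⁻¹' ((fun p : ℝ × ℝ => p.1 + p.2) ⁻¹' A) = (fun y => x + y) ⁻¹' A := rfl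
    rw [hpre, ← Measure.map_apply (by fun_prop) hA, gaussianReal_map_const_add x, zero_add,
      gaussianReal_of_var_ne_zero x h2, withDensity_apply _ hA]
  simp_rw [step1]
  have hk2 : Measurable (Function.uncurry fun x t : ℝ => gaussianPDF x v2 t) := by
    unfold gaussianPDF gaussianPDFReal
    fun_prop
  rw [gaussianReal_of_var_ne_zero 0 h1,
    lintegral_withDensity_eq_lintegral_mul _ (measurable_gaussianPDF 0 v1)
      hk2.lintegral_prod_right]
  have step2 : (fun x => gaussianPDF 0 v1 x * ∫⁻ t in A, gaussianPDF x v2 t) =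
      fun x => ∫⁻ t in A, gaussianPDF 0 v1 x * gaussianPDF x v2 t := by
    funext x
    rw [lintegral_const_mul _ (by unfold gaussianPDF gaussianPDFReal; fun_prop)]
  simp only [Pi.mul_apply]
  rw [step2, lintegral_lintegral_swap (by exact (hk.comp (measurable_id.prodMap measurable_id)).aemeasurable)]
  have step3 : ∀ t : ℝ, ∫⁻ x, gaussianPDF 0 v1 x * gaussianPDF x v2 t = gaussianPDF 0 (v1 + v2) t := by
    intro t
    have hpt : ∀ x : ℝ, gaussianPDF 0 v1 x * gaussianPDF x v2 t =
        ENNReal.ofReal (gaussianPDFReal 0 v1 x * gaussianPDFReal 0 v2 (t - x)) := by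
      intro x
      have : gaussianPDFReal x v2 t = gaussianPDFReal 0 v2 (t - x) := by
        show (Real.sqrt (2 * Real.pi * v2))⁻¹ * Real.exp (-(t - x)^2 / (2 * v2)) =
          (Real.sqrt (2 * Real.pi * v2))⁻¹ * Real.exp (-(t - x - 0)^2 / (2 * v2))
        rw [sub_zero]
      rw [gaussianPDF, gaussianPDF, this,
        ← ENNReal.ofReal_mul (gaussianPDFReal_nonneg 0 v1 x)]
    simp_rw [hpt]
    have hint : Integrable (fun x => gaussianPDFReal 0 v1 x * gaussianPDFReal 0 v2 (t - x)) := by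
      have := Integrable.bdd_mul (c := (Real.sqrt (2 * Real.pi * v2))⁻¹) (integrable_gaussianPDFReal 0 v1)
        (((measurable_gaussianPDFReal 0 v2).comp (measurable_const.sub measurable_id)).aestronglyMeasurable)
        (Filter.Eventually.of_forall fun x => by
          show ‖gaussianPDFReal 0 v2 (t - x)‖ ≤ _
          rw [Real.norm_of_nonneg (gaussianPDFReal_nonneg _ _ _)]
          exact gaussianPDFReal_le v2 (t - x))
      simpa [mul_comm] using this
    rw [← ofReal_integral_eq_lintegral_ofReal hint (Filter.Eventually.of_forall fun x =>
      mul_nonneg (gaussianPDFReal_nonneg _ _ _) (gaussianPDFReal_nonneg _ _ _))]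
    rw [gaussianPDFReal_conv v1 v2 h1 h2 t, gaussianPDF]
  simp_rw [step3]
  rw [gaussianReal_of_var_ne_zero 0 (by simp [h1]), withDensity_apply _ hA]


/-! ### Pi-space: law of a linear functional -/

lemma piGauss_map_linear (v : ℝ≥0) :
    ∀ (n : ℕ) (w : Fin n → ℝ),
      (Measure.pi fun _ : Fin n => gaussianReal 0 v).map (fun ξ => ∑ i, w i * ξ i) =
        gaussianReal 0 (∑ i, Real.toNNReal ((w i)^2) * v) := by
  intro n
  induction n with
  | zero =>
      intro w
      rw [Measure.pi_of_empty, Measure.map_dirac' (by fun_prop)]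
      simp [gaussianReal_zero_var]
  | succ n ih =>
      intro w
      have hmp := measurePreserving_piFinSuccAbove (fun _ : Fin (n+1) => gaussianReal 0 v) 0
      set e := MeasurableEquiv.piFinSuccAbove (fun _ : Fin (n+1) => ℝ) 0 with he
      set w' : Fin n → ℝ := fun j => w ((0 : Fin (n+1)).succAbove j) with hw'
      set g1 : ℝ → ℝ := fun x => w 0 * x with hg1
      set g2 : (Fin n → ℝ) → ℝ := fun ξ => ∑ j, w' j * ξ j with hg2
      have hfact : (fun ξ : Fin (n+1) → ℝ => ∑ i, w i * ξ i) =
          ((fun p : ℝ × ℝ => p.1 + p.2) ∘ Prod.map g1 g2) ∘ e := by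
        funext ξ
        show ∑ i, w i * ξ i = g1 (ξ 0) + g2 (fun j => ξ ((0 : Fin (n+1)).succAbove j))
        rw [Fin.sum_univ_succ, hg1, hg2]
        simp [hw', Fin.succAbove_zero]
      have hgmeas : Measurable ((fun p : ℝ × ℝ => p.1 + p.2) ∘ Prod.map g1 g2) := by
        fun_prop
      rw [hfact, ← Measure.map_map hgmeas e.measurable, hmp.map_eq,
        ← Measure.map_map (by fun_prop : Measurable fun p : ℝ × ℝ => p.1 + p.2) (by fun_prop : Measurable (Prod.map g1 g2)),
        ← Measure.map_prod_map _ _ (by fun_prop : Measurable g1) (by fun_prop : Measurable g2)]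
      rw [hg1]
      have hmap1 : Measure.map (fun x => w 0 * x) (gaussianReal 0 v) =
          gaussianReal 0 (Real.toNNReal ((w 0)^2) * v) := by
        rw [gaussianReal_map_const_mul (w 0)]
        congr 2
        · ring
        · ext
          simp [Real.toNNReal, max_eq_left (sq_nonneg (w 0))]
      rw [hmap1, hg2, ih w', gaussianReal_conv]
      congr 1
      rw [Fin.sum_univ_succ]
      rfl

/-! ### Pi-space: Cameron-Martin shift -/

lemma piGauss_shift (v : ℝ≥0) (hv : v ≠ 0) :
    ∀ (n : ℕ) (w : Fin n → ℝ) (G : (Fin n → ℝ) → ℝ≥0∞), Measurable G →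
      ∫⁻ ξ, G (ξ + w) ∂(Measure.pi fun _ : Fin n => gaussianReal 0 v) =
        ∫⁻ ξ, G ξ * ENNReal.ofReal
            (Real.exp ((∑ i, w i * ξ i) / v - (∑ i, (w i)^2) / (2 * v)))
          ∂(Measure.pi fun _ : Fin n => gaussianReal 0 v) := by
  intro n
  induction n with
  | zero =>
      intro w G hG
      have hw0 : ∀ ξ : Fin 0 → ℝ, ξ + w = ξ := fun ξ => Subsingleton.elim _ _
      simp [hw0]
  | succ n ih =>
      intro w G hG
      have hmp := measurePreserving_piFinSuccAbove (fun _ : Fin (n+1) => gaussianReal 0 v) 0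
      set e := MeasurableEquiv.piFinSuccAbove (fun _ : Fin (n+1) => ℝ) 0 with he
      set w' : Fin n → ℝ := fun j => w ((0 : Fin (n+1)).succAbove j) with hw'
      have hesymm : ∀ (x : ℝ) (x' : Fin n → ℝ), e.symm (x, x') = Fin.insertNth 0 x x' :=
        fun x x' => rfl
      have hwdecomp : w = Fin.insertNth 0 (w 0) w' := by
        rw [hw']
        exact (Fin.insertNth_self_removeNth 0 w).symm
      -- transfer both sides to the product measure
      have hL : ∫⁻ ξ, G (ξ + w) ∂(Measure.pi fun _ : Fin (n+1) => gaussianReal 0 v) =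
          ∫⁻ p, G (e.symm p + w)
            ∂((gaussianReal 0 v).prod (Measure.pi fun _ : Fin n => gaussianReal 0 v)) := by
        rw [← (hmp.symm e).lintegral_comp (f := fun ξ => G (ξ + w))
          (hG.comp (measurable_id.add_const w))]
      have hR : ∫⁻ ξ, G ξ * ENNReal.ofReal
            (Real.exp ((∑ i, w i * ξ i) / v - (∑ i, (w i)^2) / (2 * v)))
            ∂(Measure.pi fun _ : Fin (n+1) => gaussianReal 0 v) =
          ∫⁻ p, G (e.symm p) * ENNReal.ofReal
            (Real.exp ((∑ i, w i * (e.symm p) i) / v - (∑ i, (w i)^2) / (2 * v)))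
            ∂((gaussianReal 0 v).prod (Measure.pi fun _ : Fin n => gaussianReal 0 v)) := by
        rw [← (hmp.symm e).lintegral_comp (f := fun ξ => G ξ * ENNReal.ofReal
          (Real.exp ((∑ i, w i * ξ i) / v - (∑ i, (w i)^2) / (2 * v)))) (by fun_prop)]
      rw [hL, hR]
      set Pi_n := (Measure.pi fun _ : Fin n => gaussianReal 0 v) with hPi
      set C' : (Fin n → ℝ) → ℝ≥0∞ := fun x' => ENNReal.ofReal
        (Real.exp ((∑ j, w' j * x' j) / v - (∑ j, (w' j)^2) / (2 * v))) with hC'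
      have hC'meas : Measurable C' := by
        apply Measurable.ennreal_ofReal
        apply Real.measurable_exp.comp
        apply Measurable.sub
        · exact (Finset.measurable_sum _ fun j _ => (measurable_pi_apply j).const_mul _).div_const _
        · exact measurable_const
      have hGadd : Measurable fun p : ℝ × (Fin n → ℝ) => G (e.symm p + w) :=
        hG.comp (e.symm.measurable.add_const w)
      have hsum1 : ∀ (x : ℝ) (x' : Fin n → ℝ),
          ∑ i, w i * (e.symm (x, x')) i = w 0 * x + ∑ j, w' j * x' j := by
        intro x x'
        rw [hesymm, Fin.sum_univ_succ]
        simp only [Fin.insertNth_apply_same, ← Fin.succAbove_zero, Fin.insertNth_apply_succAbove]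
        rfl
      have hsum2 : ∑ i : Fin (n+1), (w i)^2 = (w 0)^2 + ∑ j, (w' j)^2 := by
        rw [Fin.sum_univ_succ]
        simp only [← Fin.succAbove_zero]
        rfl
      have hrhomeas : Measurable fun p : ℝ × (Fin n → ℝ) => G (e.symm p) * ENNReal.ofReal
          (Real.exp ((∑ i, w i * (e.symm p) i) / v - (∑ i, (w i)^2) / (2 * v))) := by
        apply Measurable.mul (hG.comp e.symm.measurable)
        apply Measurable.ennreal_ofReal
        apply Real.measurable_exp.comp
        apply Measurable.sub _ measurable_const
        apply Measurable.div_const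
        exact Finset.measurable_sum _ fun i _ =>
          ((measurable_pi_apply i).comp e.symm.measurable).const_mul _
      have hGin : ∀ c : ℝ, Measurable fun x' : Fin n → ℝ => G (e.symm (c, x')) :=
        fun c => hG.comp (e.symm.measurable.comp measurable_prodMk_left)
      have inner_eq : ∀ x : ℝ, (∫⁻ x', G (e.symm (x, x') + w) ∂Pi_n) =
          ∫⁻ x', G (e.symm (x + w 0, x')) * C' x' ∂Pi_n := by
        intro x
        have h1 : ∀ x' : Fin n → ℝ, G (e.symm (x, x') + w) =
            G (e.symm (x + w 0, x' + w')) := by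
          intro x'
          rw [hesymm, hesymm]
          conv_lhs => rw [hwdecomp]
          rw [Fin.insertNth_add]
        simp_rw [h1]
        have := ih w' (fun x' => G (e.symm (x + w 0, x'))) (hGin (x + w 0))
        simpa [hC'] using this
      have hFmeas : Measurable fun x : ℝ => ∫⁻ x', G (e.symm (x, x')) * C' x' ∂Pi_n := by
        have hu : Measurable (Function.uncurry fun (x : ℝ) (x' : Fin n → ℝ) =>
            G (e.symm (x, x')) * C' x') := by
          apply Measurable.mul
          · exact hG.comp (e.symm.measurable.comp (measurable_fst.prodMk measurable_snd))
          · exact hC'meas.comp measurable_snd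
        exact hu.lintegral_prod_right
      calc ∫⁻ p, G (e.symm p + w) ∂((gaussianReal 0 v).prod Pi_n)
          = ∫⁻ x, ∫⁻ x', G (e.symm (x, x') + w) ∂Pi_n ∂(gaussianReal 0 v) :=
            lintegral_prod _ hGadd.aemeasurable
        _ = ∫⁻ x, (fun t => ∫⁻ x', G (e.symm (t, x')) * C' x' ∂Pi_n) (x + w 0)
              ∂(gaussianReal 0 v) := by
            exact lintegral_congr fun x => inner_eq x
        _ = ∫⁻ x, (∫⁻ x', G (e.symm (x, x')) * C' x' ∂Pi_n) *
              ENNReal.ofReal (Real.exp (w 0 * x / v - (w 0)^2 / (2 * v)))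
              ∂(gaussianReal 0 v) := by
            exact lintegral_gaussian_shift v hv (w 0) hFmeas
        _ = ∫⁻ x, ∫⁻ x', G (e.symm (x, x')) * C' x' *
              ENNReal.ofReal (Real.exp (w 0 * x / v - (w 0)^2 / (2 * v))) ∂Pi_n
              ∂(gaussianReal 0 v) := by
            refine lintegral_congr fun x => ?_
            rw [lintegral_mul_const _ ((hGin x).fun_mul hC'meas)]
        _ = ∫⁻ x, ∫⁻ x', G (e.symm (x, x')) * ENNReal.ofReal
              (Real.exp ((∑ i, w i * (e.symm (x, x')) i) / v - (∑ i, (w i)^2) / (2 * v))) ∂Pi_n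
              ∂(gaussianReal 0 v) := by
            refine lintegral_congr fun x => lintegral_congr fun x' => ?_
            rw [mul_assoc, hC', ← ENNReal.ofReal_mul (Real.exp_nonneg _), ← Real.exp_add,
              hsum1 x x', hsum2]
            congr 3
            have hVne : (v:ℝ) ≠ 0 := by
              simpa using hv
            field_simp
            ring
        _ = ∫⁻ p, G (e.symm p) * ENNReal.ofReal
              (Real.exp ((∑ i, w i * (e.symm p) i) / v - (∑ i, (w i)^2) / (2 * v)))
              ∂((gaussianReal 0 v).prod Pi_n) :=
            (lintegral_prod _ hrhomeas.aemeasurable).symm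


end RS

namespace RS


instance isoGaussian_prob (d : ℕ) (σ : ℝ) : IsProbabilityMeasure (isoGaussian d σ) := by
  rw [isoGaussian]
  exact Measure.isProbabilityMeasure_map
    (MeasurableEquiv.toLp 2 (Fin d → ℝ)).measurable.aemeasurable

lemma integral_isoGaussian (d : ℕ) (σ : ℝ) (f : EuclideanSpace ℝ (Fin d) → ℝ) :
    ∫ z, f z ∂(isoGaussian d σ) =
      ∫ ξ, f ((MeasurableEquiv.toLp 2 (Fin d → ℝ)).symm.symm ξ)
        ∂(Measure.pi fun _ : Fin d => gaussianReal 0 (Real.toNNReal (σ ^ 2))) := by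
  rw [isoGaussian, integral_map_equiv]
  rfl

/-- The Neyman-Pearson style lower bound for Gaussian smoothing. -/
lemma np_lower {d : ℕ} {σ : ℝ} (hσ : 0 < σ) (f : EuclideanSpace ℝ (Fin d) → ℝ)
    (hf : Measurable f) (hf0 : ∀ z, 0 ≤ f z) (hf1 : ∀ z, f z ≤ 1)
    (x δ : EuclideanSpace ℝ (Fin d))
    (hp : (∫ ξ, f (x + ξ) ∂(isoGaussian d σ)) ∈ Set.Ioo (0:ℝ) 1) :
    stdNormalCDF (stdNormalCDFInv (∫ ξ, f (x + ξ) ∂(isoGaussian d σ)) - ‖δ‖ / σ) ≤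
      ∫ ξ, f (x + δ + ξ) ∂(isoGaussian d σ) := by
  set p : ℝ := ∫ ξ, f (x + ξ) ∂(isoGaussian d σ) with hpdef
  rcases eq_or_ne δ 0 with hδ | hδ
  · subst hδ
    rw [norm_zero, zero_div, sub_zero, stdNormalCDF_invFun hp]
    simp only [add_zero]
    exact le_refl _
  -- notation
  set es := (MeasurableEquiv.toLp 2 (Fin d → ℝ)).symm with hes
  set v : ℝ≥0 := Real.toNNReal (σ ^ 2) with hvdef
  have hVcoe : (v : ℝ) = σ ^ 2 := Real.coe_toNNReal _ (sq_nonneg σ)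
  have hv : v ≠ 0 := by
    intro hv0
    rw [hv0] at hVcoe
    exact absurd hVcoe.symm (by positivity)
  set Lam := Measure.pi fun _ : Fin d => gaussianReal 0 v with hLam
  set b : ℝ := ‖δ‖ with hbdef
  have hb : 0 < b := norm_pos_iff.mpr hδ
  set w : Fin d → ℝ := es δ with hwdef
  have hb2 : ∑ i, (w i)^2 = b^2 := by
    rw [hbdef, EuclideanSpace.norm_eq, Real.sq_sqrt (by positivity)]
    simp [Real.norm_eq_abs, sq_abs]
    rfl
  set T : (Fin d → ℝ) → ℝ := fun ξ => ∑ i, w i * ξ i with hTdef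
  have hTmeas : Measurable T :=
    Finset.measurable_sum _ fun i _ => (measurable_pi_apply i).const_mul _
  have hTlaw : ∀ t : ℝ, Lam {ξ | T ξ ≤ t} = ENNReal.ofReal (stdNormalCDF (t / (σ * b))) := by
    intro t
    have h1 : Lam {ξ | T ξ ≤ t} = Lam.map T (Iic t) := by
      rw [Measure.map_apply hTmeas measurableSet_Iic]
      rfl
    rw [h1, hLam, piGauss_map_linear v d w]
    have hvar : (∑ i, Real.toNNReal ((w i)^2) * v) = Real.toNNReal ((σ * b)^2) := by
      have hcoe : ((∑ i, Real.toNNReal ((w i)^2) * v : ℝ≥0) : ℝ) =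
          ((Real.toNNReal ((σ * b)^2) : ℝ≥0) : ℝ) := by
        rw [NNReal.coe_sum, Real.coe_toNNReal _ (by positivity)]
        calc ∑ i, ((Real.toNNReal ((w i)^2) * v : ℝ≥0) : ℝ)
            = ∑ i, ((w i)^2 * (v:ℝ)) := by
              refine Finset.sum_congr rfl fun i _ => ?_
              rw [NNReal.coe_mul, Real.coe_toNNReal _ (sq_nonneg _)]
          _ = (σ * b)^2 := by
              rw [← Finset.sum_mul, hb2, hVcoe]
              ring
      exact NNReal.coe_injective hcoe
    rw [hvar, gaussianReal_Iic_eq (σ * b) (by positivity) t]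
  -- lintegral quantities
  set F : (Fin d → ℝ) → ℝ≥0∞ := fun ξ => ENNReal.ofReal (f (x + es.symm ξ)) with hFdef
  have hFmeas : Measurable F := by
    apply Measurable.ennreal_ofReal
    exact hf.comp (es.symm.measurable.const_add x)
  have hFle : ∀ ξ, F ξ ≤ 1 := fun ξ => by
    rw [hFdef]
    calc ENNReal.ofReal (f (x + es.symm ξ)) ≤ ENNReal.ofReal 1 :=
          ENNReal.ofReal_le_ofReal (hf1 _)
      _ = 1 := ENNReal.ofReal_one
  set rho : (Fin d → ℝ) → ℝ≥0∞ := fun ξ =>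
    ENNReal.ofReal (Real.exp ((∑ i, w i * ξ i) / v - (∑ i, (w i)^2) / (2 * v))) with hrhodef
  have hrhomeas : Measurable rho := by
    apply Measurable.ennreal_ofReal
    apply Real.measurable_exp.comp
    exact (hTmeas.div_const _).sub measurable_const
  have hCM : ∀ (G : (Fin d → ℝ) → ℝ≥0∞), Measurable G →
      ∫⁻ ξ, G (ξ + w) ∂Lam = ∫⁻ ξ, G ξ * rho ξ ∂Lam :=
    fun G hG => piGauss_shift v hv d w G hG
  set a : ℝ := σ * b * stdNormalCDFInv p with hadef
  set S : Set (Fin d → ℝ) := {ξ | T ξ ≤ a} with hSdef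
  have hSmeas : MeasurableSet S := measurableSet_le hTmeas measurable_const
  set g : (Fin d → ℝ) → ℝ≥0∞ := S.indicator (fun _ => 1) with hgdef
  have hgmeas : Measurable g := measurable_const.indicator hSmeas
  set t0 : ℝ≥0∞ := ENNReal.ofReal (Real.exp (a / v - (∑ i, (w i)^2) / (2 * v))) with ht0def
  -- integrability for transfers
  have hint : ∀ y : EuclideanSpace ℝ (Fin d),
      Integrable (fun ξ : Fin d → ℝ => f (y + es.symm ξ)) Lam := by
    intro y
    refine ⟨(hf.comp (es.symm.measurable.const_add y)).aestronglyMeasurable, ?_⟩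
    refine HasFiniteIntegral.of_bounded (C := 1) (Filter.Eventually.of_forall fun ξ => ?_)
    rw [Real.norm_of_nonneg (hf0 _)]
    exact hf1 _
  have htransfer : ∀ y : EuclideanSpace ℝ (Fin d),
      ∫⁻ ξ, ENNReal.ofReal (f (y + es.symm ξ)) ∂Lam =
        ENNReal.ofReal (∫ ξ, f (y + ξ) ∂(isoGaussian d σ)) := by
    intro y
    rw [integral_isoGaussian, ← hes, ← hvdef, ← hLam,
      ofReal_integral_eq_lintegral_ofReal (hint y)
        (Filter.Eventually.of_forall fun ξ => hf0 _)]
  have hI1 : ∫⁻ ξ, F ξ ∂Lam = ENNReal.ofReal p := htransfer x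
  have hI2 : ∫⁻ ξ, F ξ * rho ξ ∂Lam =
      ENNReal.ofReal (∫ ξ, f (x + δ + ξ) ∂(isoGaussian d σ)) := by
    rw [← hCM F hFmeas]
    have hFw : ∀ ξ : Fin d → ℝ, F (ξ + w) = ENNReal.ofReal (f ((x + δ) + es.symm ξ)) := by
      intro ξ
      show ENNReal.ofReal (f (x + es.symm (ξ + w))) = _
      have h' : x + es.symm (ξ + w) = x + δ + es.symm ξ := by
        show x + (es.symm ξ + δ) = x + δ + es.symm ξ
        abel
      rw [h']
    simp_rw [hFw]
    exact htransfer (x + δ)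
  have hG1 : ∫⁻ ξ, g ξ ∂Lam = ENNReal.ofReal p := by
    rw [hgdef, lintegral_indicator hSmeas, setLIntegral_one, hSdef, hTlaw a, hadef]
    rw [show σ * b * stdNormalCDFInv p / (σ * b) = stdNormalCDFInv p by
      field_simp]
    rw [stdNormalCDF_invFun hp]
  have hG2 : ∫⁻ ξ, g ξ * rho ξ ∂Lam =
      ENNReal.ofReal (stdNormalCDF (stdNormalCDFInv p - b / σ)) := by
    rw [← hCM g hgmeas]
    have hshift : ∀ ξ : Fin d → ℝ, g (ξ + w) =
        ({ξ : Fin d → ℝ | T ξ ≤ a - b^2}).indicator (fun _ => (1:ℝ≥0∞)) ξ := by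
      intro ξ
      rw [hgdef]
      have hTs : T (ξ + w) = T ξ + b^2 := by
        rw [hTdef, ← hb2]
        simp only [Pi.add_apply]
        rw [← Finset.sum_add_distrib]
        refine Finset.sum_congr rfl fun i _ => ?_
        ring
      by_cases hc : T ξ ≤ a - b^2
      · have hm1 : ξ + w ∈ S := by
          show T (ξ + w) ≤ a
          rw [hTs]
          linarith
        have hm2 : ξ ∈ {ξ : Fin d → ℝ | T ξ ≤ a - b^2} := hc
        rw [Set.indicator_of_mem hm1, Set.indicator_of_mem hm2]
      · have hm1 : ξ + w ∉ S := by
          show ¬ T (ξ + w) ≤ a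
          rw [hTs]
          intro hcc
          exact hc (by linarith)
        have hm2 : ξ ∉ {ξ : Fin d → ℝ | T ξ ≤ a - b^2} := hc
        rw [Set.indicator_of_notMem hm1, Set.indicator_of_notMem hm2]
    simp_rw [hshift]
    rw [lintegral_indicator (measurableSet_le hTmeas measurable_const), setLIntegral_one,
      hTlaw (a - b^2)]
    congr 1
    rw [hadef]
    congr 1
    field_simp
  -- pointwise Neyman-Pearson inequality
  have hpoint : ∀ ξ, g ξ * rho ξ + t0 * F ξ ≤ F ξ * rho ξ + t0 * g ξ := by
    intro ξ
    by_cases hc : ξ ∈ S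
    · have hrt : rho ξ ≤ t0 := by
        rw [hrhodef, ht0def]
        apply ENNReal.ofReal_le_ofReal
        apply Real.exp_le_exp.mpr
        have hTa : (∑ i, w i * ξ i) ≤ a := hc
        have hVpos : (0:ℝ) < (v:ℝ) := by rw [hVcoe]; positivity
        gcongr
      rw [hgdef, Set.indicator_of_mem hc]
      have ht0split : t0 = (t0 - rho ξ) + rho ξ := (tsub_add_cancel_of_le hrt).symm
      calc (1:ℝ≥0∞) * rho ξ + t0 * F ξ = rho ξ + ((t0 - rho ξ) + rho ξ) * F ξ := by
            rw [one_mul, ← ht0split]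
        _ = rho ξ + ((t0 - rho ξ) * F ξ + rho ξ * F ξ) := by rw [add_mul]
        _ ≤ rho ξ + ((t0 - rho ξ) * 1 + rho ξ * F ξ) := by
            apply add_le_add_right
            apply add_le_add_left
            exact mul_le_mul_right (hFle ξ) _
        _ = F ξ * rho ξ + ((t0 - rho ξ) + rho ξ) := by
            rw [mul_one, mul_comm (rho ξ) (F ξ)]
            ring
        _ = F ξ * rho ξ + t0 * 1 := by rw [← ht0split, mul_one]
    · have hrt : t0 ≤ rho ξ := by
        rw [hrhodef, ht0def]
        apply ENNReal.ofReal_le_ofReal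
        apply Real.exp_le_exp.mpr
        have hTa : a < T ξ := by
          by_contra hcc
          exact hc (le_of_not_gt hcc)
        have hVpos : (0:ℝ) < (v:ℝ) := by rw [hVcoe]; positivity
        have hTa' : a ≤ ∑ i, w i * ξ i := hTa.le
        gcongr
      rw [hgdef, Set.indicator_of_notMem hc, zero_mul, zero_add, mul_zero, add_zero,
        mul_comm (F ξ) (rho ξ)]
      exact mul_le_mul_left hrt _
  -- integrate
  have hintineq : ∫⁻ ξ, (g ξ * rho ξ + t0 * F ξ) ∂Lam ≤ ∫⁻ ξ, (F ξ * rho ξ + t0 * g ξ) ∂Lam :=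
    lintegral_mono hpoint
  rw [lintegral_add_left (hgmeas.fun_mul hrhomeas) _, lintegral_add_left (hFmeas.fun_mul hrhomeas) _,
    lintegral_const_mul t0 hFmeas, lintegral_const_mul t0 hgmeas, hG1, hG2, hI1, hI2] at hintineq
  have hcancel : ENNReal.ofReal (stdNormalCDF (stdNormalCDFInv p - b / σ)) ≤
      ENNReal.ofReal (∫ ξ, f (x + δ + ξ) ∂(isoGaussian d σ)) := by
    have hfin : t0 * ENNReal.ofReal p ≠ ⊤ := by
      apply ENNReal.mul_ne_top ENNReal.ofReal_ne_top ENNReal.ofReal_ne_top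
    exact (ENNReal.add_le_add_iff_right hfin).mp hintineq
  have hnn : 0 ≤ ∫ ξ, f (x + δ + ξ) ∂(isoGaussian d σ) :=
    integral_nonneg fun ξ => hf0 _
  exact (ENNReal.ofReal_le_ofReal_iff hnn).mp hcancel


lemma np_upper {d : ℕ} {σ : ℝ} (hσ : 0 < σ) (f : EuclideanSpace ℝ (Fin d) → ℝ)
    (hf : Measurable f) (hf0 : ∀ z, 0 ≤ f z) (hf1 : ∀ z, f z ≤ 1)
    (x δ : EuclideanSpace ℝ (Fin d))
    (hp : (∫ ξ, f (x + ξ) ∂(isoGaussian d σ)) ∈ Set.Ioo (0:ℝ) 1) :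
    ∫ ξ, f (x + δ + ξ) ∂(isoGaussian d σ) ≤
      stdNormalCDF (stdNormalCDFInv (∫ ξ, f (x + ξ) ∂(isoGaussian d σ)) + ‖δ‖ / σ) := by
  set p : ℝ := ∫ ξ, f (x + ξ) ∂(isoGaussian d σ) with hpdef
  have hint : ∀ y : EuclideanSpace ℝ (Fin d),
      Integrable (fun ξ => f (y + ξ)) (isoGaussian d σ) := by
    intro y
    refine ⟨(hf.comp (measurable_id.const_add y)).aestronglyMeasurable, ?_⟩
    refine HasFiniteIntegral.of_bounded (C := 1) (Filter.Eventually.of_forall fun ξ => ?_)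
    rw [Real.norm_of_nonneg (hf0 _)]
    exact hf1 _
  have hcompl : ∀ y : EuclideanSpace ℝ (Fin d),
      ∫ ξ, (1 - f (y + ξ)) ∂(isoGaussian d σ) = 1 - ∫ ξ, f (y + ξ) ∂(isoGaussian d σ) := by
    intro y
    rw [integral_sub (integrable_const 1) (hint y), integral_const]
    simp
  have hp' : (∫ ξ, (fun z => 1 - f z) (x + ξ) ∂(isoGaussian d σ)) ∈ Set.Ioo (0:ℝ) 1 := by
    simp only
    rw [hcompl x]
    exact ⟨by linarith [hp.2], by linarith [hp.1]⟩
  have key := np_lower hσ (fun z => 1 - f z) (measurable_const.sub hf)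
    (fun z => by show (0:ℝ) ≤ 1 - f z; linarith [hf1 z])
    (fun z => by show 1 - f z ≤ (1:ℝ); linarith [hf0 z]) x δ hp'
  rw [hcompl x, hcompl (x + δ)] at key
  have hsymm := stdNormalCDF_neg (stdNormalCDFInv p + ‖δ‖ / σ)
  have hinv := stdNormalCDFInv_one_sub hp
  have harg : stdNormalCDFInv (1 - p) - ‖δ‖ / σ = -(stdNormalCDFInv p + ‖δ‖ / σ) := by
    rw [hinv]
    ring
  rw [harg, hsymm] at key
  linarith

end RS

/-- **Randomized smoothing classifiers are certifiably robust with margin `(1-α)/α`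
and radius `r_σ^α(x) = (σ/2)(Φ⁻¹(α h_y(x)) - Φ⁻¹(α h_{y'}(x) + 1 - α))`.** -/
theorem randomized_smoothing_robust_with_margin
    {d c : ℕ} (hc : 2 ≤ c) (σ : ℝ) (hσ : 0 < σ)
    (hbar : EuclideanSpace ℝ (Fin d) → Fin c → ℝ)
    (hbar_meas : ∀ i, Measurable fun z => hbar z i)
    (hbar_range : ∀ z i, hbar z i ∈ Set.Icc (0 : ℝ) 1)
    (h : EuclideanSpace ℝ (Fin d) → Fin c → ℝ)
    (hdef : ∀ x i, h x i = ∫ ξ, hbar (x + ξ) i ∂(isoGaussian d σ))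
    (hrange : ∀ x i, h x i ∈ Set.Ioo (0 : ℝ) 1)
    (x : EuclideanSpace ℝ (Fin d))
    (y : Fin c) (hy : ∀ i, h x i ≤ h x y)
    (y' : Fin c) (hy' : y' ≠ y) (hy'max : ∀ i, i ≠ y → h x i ≤ h x y')
    (α : ℝ) (hα : α ∈ Set.Icc (1 / 2 : ℝ) 1)
    (hαy : α * h x y ∈ Set.Ioo (0 : ℝ) 1)
    (hαy' : α * h x y' + 1 - α ∈ Set.Ioo (0 : ℝ) 1) :
    ∀ δ : EuclideanSpace ℝ (Fin d),
      ‖δ‖ ≤ σ / 2 * (stdNormalCDFInv (α * h x y) - stdNormalCDFInv (α * h x y' + 1 - α)) →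
      ∀ i, i ≠ y → h (x + δ) i + (1 - α) / α ≤ h (x + δ) y := by
  intro δ hδ i hiy
  have hα0 : (0:ℝ) < α := lt_of_lt_of_le (by norm_num) hα.1
  have hα1 : α ≤ 1 := hα.2
  set b : ℝ := ‖δ‖ with hbdef
  have hbnn : 0 ≤ b := norm_nonneg δ
  have hbar_int : ∀ (z : EuclideanSpace ℝ (Fin d)) (j : Fin c),
      Integrable (fun ξ => hbar (z + ξ) j) (isoGaussian d σ) := by
    intro z j
    refine ⟨((hbar_meas j).comp (measurable_id.const_add z)).aestronglyMeasurable, ?_⟩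
    refine HasFiniteIntegral.of_bounded (C := 1) (Filter.Eventually.of_forall fun ξ => ?_)
    rw [Real.norm_of_nonneg (hbar_range _ _).1]
    exact (hbar_range _ _).2
  -- smoothing identities
  have hsm1 : ∀ z : EuclideanSpace ℝ (Fin d),
      ∫ ξ, (fun u => α * hbar u y) (z + ξ) ∂(isoGaussian d σ) = α * h z y := by
    intro z
    simp only
    rw [integral_const_mul, hdef z y]
  have hsm2 : ∀ z : EuclideanSpace ℝ (Fin d),
      ∫ ξ, (fun u => α * hbar u i + (1 - α)) (z + ξ) ∂(isoGaussian d σ) =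
        α * h z i + (1 - α) := by
    intro z
    simp only
    rw [integral_add ((hbar_int z i).const_mul α) (integrable_const _), integral_const_mul,
      hdef z i, integral_const]
    simp
  -- lower bound for class y
  have hpy : (∫ ξ, (fun u => α * hbar u y) (x + ξ) ∂(isoGaussian d σ)) ∈ Set.Ioo (0:ℝ) 1 := by
    rw [hsm1 x]
    exact hαy
  have key1 := RS.np_lower hσ (fun u => α * hbar u y) ((hbar_meas y).const_mul α)
    (fun z => mul_nonneg hα0.le (hbar_range z y).1)
    (fun z => by
      show α * hbar z y ≤ 1
      nlinarith [(hbar_range z y).2, (hbar_range z y).1])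
    x δ hpy
  rw [hsm1 x, hsm1 (x + δ)] at key1
  -- upper bound for class i
  have hpi : (∫ ξ, (fun u => α * hbar u i + (1 - α)) (x + ξ) ∂(isoGaussian d σ)) ∈
      Set.Ioo (0:ℝ) 1 := by
    rw [hsm2 x]
    have hxi := hrange x i
    constructor
    · nlinarith [(hrange x i).1]
    · nlinarith [(hrange x i).2]
  have key2 := RS.np_upper hσ (fun u => α * hbar u i + (1 - α))
    (((hbar_meas i).const_mul α).add_const _)
    (fun z => by
      show (0:ℝ) ≤ α * hbar z i + (1 - α)
      nlinarith [(hbar_range z i).1])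
    (fun z => by
      show α * hbar z i + (1 - α) ≤ 1
      nlinarith [(hbar_range z i).2])
    x δ hpi
  rw [hsm2 x, hsm2 (x + δ)] at key2
  -- monotonicity in the inverse CDF
  have hqi : α * h x i + (1 - α) ∈ Set.Ioo (0:ℝ) 1 := by
    constructor
    · nlinarith [(hrange x i).1]
    · nlinarith [(hrange x i).2]
  have hqy' : α * h x y' + (1 - α) ∈ Set.Ioo (0:ℝ) 1 := by
    constructor
    · linarith [hαy'.1]
    · linarith [hαy'.2]
  have hmono1 : stdNormalCDFInv (α * h x i + (1 - α)) ≤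
      stdNormalCDFInv (α * h x y' + (1 - α)) := by
    apply RS.stdNormalCDFInv_le_invFun hqi hqy'
    have := hy'max i hiy
    nlinarith
  have hBeq : α * h x y' + 1 - α = α * h x y' + (1 - α) := by ring
  rw [hBeq] at hδ
  have hbs : b / σ ≤ (stdNormalCDFInv (α * h x y) -
      stdNormalCDFInv (α * h x y' + (1 - α))) / 2 := by
    rw [div_le_div_iff₀ hσ (by norm_num : (0:ℝ) < 2)]
    calc b * 2 ≤ (σ / 2 * (stdNormalCDFInv (α * h x y) -
          stdNormalCDFInv (α * h x y' + (1 - α)))) * 2 := by linarith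
      _ = (stdNormalCDFInv (α * h x y) - stdNormalCDFInv (α * h x y' + (1 - α))) * σ := by
          ring
  have hargle : stdNormalCDFInv (α * h x i + (1 - α)) + b / σ ≤
      stdNormalCDFInv (α * h x y) - b / σ := by
    linarith
  have hchain : α * h (x + δ) i + (1 - α) ≤ α * h (x + δ) y := by
    calc α * h (x + δ) i + (1 - α)
        ≤ stdNormalCDF (stdNormalCDFInv (α * h x i + (1 - α)) + b / σ) := key2
      _ ≤ stdNormalCDF (stdNormalCDFInv (α * h x y) - b / σ) :=
          RS.stdNormalCDF_strictMono.monotone hargle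
      _ ≤ α * h (x + δ) y := key1
  have hgoal : α * (h (x + δ) i + (1 - α) / α) ≤ α * h (x + δ) y := by
    have hexp : α * (h (x + δ) i + (1 - α) / α) = α * h (x + δ) i + (1 - α) := by
      field_simp
    rw [hexp]
    exact hchain
  exact le_of_mul_le_mul_left hgoal hα0
end

section
/- Let c ≥ 2, σ > 0, and let h̄ : ℝ^d → ℝ^c be measurable with 0 ≤ h̄_i(z) ≤ 1 for all z and i. Define the randomized smoothing classifier h(x) = E_{ξ ∼ N(0, σ²I_d)}[h̄(x+ξ)] (componentwise), and assume 0 < h_i(x) < 1 for all x and i. Let g : ℝ^d → ℝ^c have componentwise values in [0,1]. Fix x ∈ ℝ^d, let y satisfy h_y(x) ≥ h_i(x) for all i, let y' ≠ y satisfy h_{y'}(x) ≥ h_i(x) for all i ≠ y, and let α ∈ [1/2, 1] be such that α·h_y(x) ∈ (0,1) and α·h_{y'}(x) + 1 − α ∈ (0,1). Set r_σ^α(x) = (σ/2)·(Φ⁻¹(α·h_y(x)) − Φ⁻¹(α·h_{y'}(x) + 1 − α)). Then for every δ ∈ ℝ^d with ‖δ‖₂ ≤ r_σ^α(x) and every i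 ∈ {1,…,c}, it holds that (1−α)·g_y(x+δ) + α·h_y(x+δ) ≥ (1−α)·g_i(x+δ) + α·h_i(x+δ); that is, the mixed classifier h^α predicts class y on all such perturbed inputs x+δ. -/
open MeasureTheory ProbabilityTheory

open Set

lemma stdNormalCDF_eq (t : ℝ) : stdNormalCDF t = ((gaussianReal 0 1) (Iic t)).toReal := by
  simp [stdNormalCDF, cdf_eq_real, measureReal_def]

lemma stdNormalCDF_eq_integral (t : ℝ) :
    stdNormalCDF t = ∫ u in Iic t, gaussianPDFReal 0 1 u := by
  rw [stdNormalCDF_eq, gaussianReal_apply_eq_integral _ one_ne_zero,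
    ENNReal.toReal_ofReal]
  exact setIntegral_nonneg measurableSet_Iic fun u _ => gaussianPDFReal_nonneg _ _ _

lemma stdNormalCDF_sub_eq (s t : ℝ) :
    stdNormalCDF t - stdNormalCDF s = ∫ u in s..t, gaussianPDFReal 0 1 u := by
  have hint : ∀ b : ℝ, IntegrableOn (gaussianPDFReal 0 1) (Iic b) := fun b =>
    (integrable_gaussianPDFReal 0 1).integrableOn
  rcases le_total s t with h | h
  · rw [intervalIntegral.integral_of_le h, stdNormalCDF_eq_integral, stdNormalCDF_eq_integral,
      ← Iic_union_Ioc_eq_Iic h, setIntegral_union (Iic_disjoint_Ioc le_rfl) measurableSet_Ioc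
        (hint s) ((integrable_gaussianPDFReal 0 1).integrableOn)]
    ring
  · rw [intervalIntegral.integral_of_ge h, stdNormalCDF_eq_integral, stdNormalCDF_eq_integral,
      ← Iic_union_Ioc_eq_Iic h, setIntegral_union (Iic_disjoint_Ioc le_rfl) measurableSet_Ioc
        (hint t) ((integrable_gaussianPDFReal 0 1).integrableOn)]
    ring

lemma continuous_gaussianPDFReal (m : ℝ) (v : NNReal) : Continuous (gaussianPDFReal m v) := by
  unfold gaussianPDFReal
  fun_prop

lemma stdNormalCDF_continuous : Continuous stdNormalCDF := by
  have h : ∀ t, stdNormalCDF t = stdNormalCDF 0 + ∫ u in (0:ℝ)..t, gaussianPDFReal 0 1 u := by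
    intro t; rw [← stdNormalCDF_sub_eq]; ring
  have : Continuous fun t : ℝ => stdNormalCDF 0 + ∫ u in (0:ℝ)..t, gaussianPDFReal 0 1 u := by
    refine continuous_const.add ?_
    exact intervalIntegral.continuous_primitive
      (fun a b => (continuous_gaussianPDFReal 0 1).intervalIntegrable a b) 0
  exact this.congr fun t => (h t).symm

lemma stdNormalCDF_strictMono : StrictMono stdNormalCDF := by
  intro s t hst
  have : 0 < ∫ u in s..t, gaussianPDFReal 0 1 u := by
    apply intervalIntegral.intervalIntegral_pos_of_pos_on
      ((continuous_gaussianPDFReal 0 1).intervalIntegrable s t)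
      (fun u _ => gaussianPDFReal_pos 0 1 u one_ne_zero) hst
  have h2 := stdNormalCDF_sub_eq s t
  linarith

lemma stdNormalCDF_mono : Monotone stdNormalCDF := stdNormalCDF_strictMono.monotone

lemma stdNormalCDF_surj {p : ℝ} (hp : p ∈ Ioo (0:ℝ) 1) : ∃ t, stdNormalCDF t = p := by
  have hbot : Filter.Tendsto stdNormalCDF Filter.atBot (nhds 0) := (tendsto_cdf_atBot (gaussianReal 0 1))
  have htop : Filter.Tendsto stdNormalCDF Filter.atTop (nhds 1) := tendsto_cdf_atTop (gaussianReal 0 1)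
  have h1 : ∀ᶠ s in Filter.atBot, stdNormalCDF s < p :=
    hbot.eventually_lt_const hp.1
  have h2 : ∀ᶠ s in Filter.atTop, p < stdNormalCDF s :=
    htop.eventually_const_lt hp.2
  obtain ⟨s, hs⟩ := h1.exists
  obtain ⟨t, ht, hst⟩ := (h2.and (Filter.eventually_ge_atTop s)).exists
  have : p ∈ Icc (stdNormalCDF s) (stdNormalCDF t) := ⟨hs.le, ht.le⟩
  obtain ⟨u, _, hu⟩ := intermediate_value_Icc hst stdNormalCDF_continuous.continuousOn this
  exact ⟨u, hu⟩

lemma stdNormalCDF_rightInv {p : ℝ} (hp : p ∈ Ioo (0:ℝ) 1) :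
    stdNormalCDF (stdNormalCDFInv p) = p :=
  Function.invFun_eq (stdNormalCDF_surj hp)

lemma stdNormalCDF_leftInv (t : ℝ) : stdNormalCDFInv (stdNormalCDF t) = t :=
  Function.leftInverse_invFun stdNormalCDF_strictMono.injective t

lemma le_stdNormalCDFInv_iff {p s : ℝ} (hp : p ∈ Ioo (0:ℝ) 1) :
    stdNormalCDFInv p ≤ s ↔ p ≤ stdNormalCDF s := by
  constructor
  · intro h
    calc p = stdNormalCDF (stdNormalCDFInv p) := (stdNormalCDF_rightInv hp).symm
    _ ≤ stdNormalCDF s := stdNormalCDF_mono h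
  · intro h
    by_contra hc
    push_neg at hc
    have := stdNormalCDF_strictMono hc
    rw [stdNormalCDF_rightInv hp] at this
    linarith

lemma stdNormalCDFInv_mono {p q : ℝ} (hp : p ∈ Ioo (0:ℝ) 1) (hq : q ∈ Ioo (0:ℝ) 1)
    (hpq : p ≤ q) : stdNormalCDFInv p ≤ stdNormalCDFInv q := by
  rw [le_stdNormalCDFInv_iff hp, stdNormalCDF_rightInv hq]
  exact hpq

lemma gaussianReal_scaled {σ : ℝ} (hσ : 0 < σ) (m : ℝ) :
    gaussianReal m (Real.toNNReal (σ ^ 2)) =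
      ((gaussianReal 0 1).map (σ * ·)).map (· + m) := by
  rw [gaussianReal_map_const_mul, gaussianReal_map_add_const]
  congr 1
  · ring
  · ext
    simp [Real.coe_toNNReal _ (sq_nonneg σ)]

lemma gaussianReal_Iic_toReal {σ : ℝ} (hσ : 0 < σ) (m β : ℝ) :
    ((gaussianReal m (Real.toNNReal (σ ^ 2))) (Iic β)).toReal
      = stdNormalCDF ((β - m) / σ) := by
  rw [gaussianReal_scaled hσ m, Measure.map_apply (measurable_id'.add_const m) measurableSet_Iic]
  have h1 : (· + m) ⁻¹' (Iic β) = Iic (β - m) := by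
    ext u; simp [le_sub_iff_add_le]
  rw [h1, Measure.map_apply (measurable_id'.const_mul σ) measurableSet_Iic]
  have h2 : (σ * ·) ⁻¹' (Iic (β - m)) = Iic ((β - m) / σ) := by
    ext u; simp [le_div_iff₀ hσ, mul_comm]
  rw [h2, stdNormalCDF_eq]

lemma setIntegral_gaussianPDFReal {σ : ℝ} (hσ : 0 < σ) (m β : ℝ) :
    ∫ u in Iic β, gaussianPDFReal m (Real.toNNReal (σ ^ 2)) u
      = stdNormalCDF ((β - m) / σ) := by
  have hv : (Real.toNNReal (σ ^ 2)) ≠ 0 := by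
    simp only [ne_eq, Real.toNNReal_eq_zero, not_le]
    positivity
  have := gaussianReal_apply_eq_integral m hv (Iic β)
  rw [← gaussianReal_Iic_toReal hσ m β, this, ENNReal.toReal_ofReal]
  exact setIntegral_nonneg measurableSet_Iic fun u _ => gaussianPDFReal_nonneg _ _ _

lemma stdNormalCDF_neg (t : ℝ) : stdNormalCDF (-t) = 1 - stdNormalCDF t := by
  have hmap : (gaussianReal 0 1).map ((-1 : ℝ) * ·) = gaussianReal 0 1 := by
    rw [gaussianReal_map_const_mul]
    norm_num
  have hsingleton : (gaussianReal 0 1) {t} = 0 := by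
    rw [gaussianReal_apply_eq_integral _ one_ne_zero]
    rw [show (∫ x in ({t} : Set ℝ), gaussianPDFReal 0 1 x) = 0 from
      setIntegral_measure_zero _ (measure_singleton t)]
    simp
  have h1 : (gaussianReal 0 1) (Iic (-t)) = (gaussianReal 0 1) (Ici t) := by
    conv_lhs => rw [← hmap]
    rw [Measure.map_apply (measurable_id'.const_mul _) measurableSet_Iic]
    congr 1
    ext u
    simp only [mem_preimage, mem_Iic, mem_Ici]
    constructor <;> intro h <;> linarith
  have hIio : (gaussianReal 0 1) (Iio t) = (gaussianReal 0 1) (Iic t) := by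
    refine le_antisymm (measure_mono Iio_subset_Iic_self) ?_
    calc (gaussianReal 0 1) (Iic t) = (gaussianReal 0 1) (Iio t ∪ {t}) := by rw [Iio_union_right]
    _ ≤ (gaussianReal 0 1) (Iio t) + (gaussianReal 0 1) {t} := measure_union_le _ _
    _ = (gaussianReal 0 1) (Iio t) := by rw [hsingleton, add_zero]
  have hIci : (gaussianReal 0 1) (Ici t) = 1 - (gaussianReal 0 1) (Iio t) := by
    rw [← compl_Iio, measure_compl measurableSet_Iio (measure_ne_top _ _), measure_univ]
  rw [stdNormalCDF_eq, stdNormalCDF_eq, h1, hIci, hIio,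
    ENNReal.toReal_sub_of_le prob_le_one ENNReal.one_ne_top, ENNReal.toReal_one]

lemma stdNormalCDFInv_one_sub {p : ℝ} (hp : p ∈ Ioo (0:ℝ) 1) :
    stdNormalCDFInv (1 - p) = - stdNormalCDFInv p := by
  have h : stdNormalCDF (- stdNormalCDFInv p) = 1 - p := by
    rw [stdNormalCDF_neg, stdNormalCDF_rightInv hp]
  rw [← h, stdNormalCDF_leftInv]

lemma integral_gaussianReal_density {v : NNReal} (hv : v ≠ 0) (φ : ℝ → ℝ) (hφ : Measurable φ)
    (m : ℝ) :
    ∫ s, φ s ∂(gaussianReal m v) = ∫ s, φ s * gaussianPDFReal m v s := by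
  rw [gaussianReal_of_var_ne_zero m hv,
    show gaussianPDF m v = (fun s => ((Real.toNNReal (gaussianPDFReal m v s) : NNReal) : ENNReal))
      from rfl,
    integral_withDensity_eq_integral_smul (measurable_gaussianPDFReal m v).real_toNNReal φ]
  congr 1; funext s
  rw [NNReal.smul_def, smul_eq_mul, Real.coe_toNNReal _ (gaussianPDFReal_nonneg m v s), mul_comm]

lemma gaussianPDFReal_ratio {v : NNReal} {a s β : ℝ} (ha : 0 ≤ a) (hs : s ≤ β) :
    gaussianPDFReal a v s * gaussianPDFReal 0 v β
      ≤ gaussianPDFReal a v β * gaussianPDFReal 0 v s := by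
  rcases eq_or_ne v 0 with rfl | hv
  · simp [gaussianPDFReal_zero_var]
  have hv' : (0:ℝ) < v := by positivity
  unfold gaussianPDFReal
  set c := (Real.sqrt (2 * Real.pi * v))⁻¹ with hc
  have hcn : 0 ≤ c := by positivity
  have key : Real.exp (-(s - a)^2 / (2*v)) * Real.exp (-(β - 0)^2 / (2*v))
      ≤ Real.exp (-(β - a)^2 / (2*v)) * Real.exp (-(s - 0)^2 / (2*v)) := by
    rw [← Real.exp_add, ← Real.exp_add, Real.exp_le_exp, ← add_div, ← add_div]
    have h2v : (0:ℝ) < 2 * v := by positivity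
    rw [div_le_div_iff₀ h2v h2v]
    nlinarith [mul_le_mul_of_nonneg_left hs ha]
  have hrw : ∀ p q : ℝ, (c * p) * (c * q) = c * c * (p * q) := by intros; ring
  rw [hrw, hrw]
  exact mul_le_mul_of_nonneg_left key (mul_nonneg hcn hcn)

lemma one_dim_np {σ : ℝ} (hσ : 0 < σ) (φ : ℝ → ℝ) (hφm : Measurable φ)
    (hφ : ∀ s, φ s ∈ Icc (0:ℝ) 1) {a : ℝ} (ha : 0 ≤ a)
    (hp : ∫ s, φ s ∂(gaussianReal 0 (Real.toNNReal (σ^2))) ∈ Ioo (0:ℝ) 1) :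
    stdNormalCDF (stdNormalCDFInv (∫ s, φ s ∂(gaussianReal 0 (Real.toNNReal (σ^2)))) - a / σ)
      ≤ ∫ s, φ (s + a) ∂(gaussianReal 0 (Real.toNNReal (σ^2))) := by
  have hv : (Real.toNNReal (σ^2)) ≠ 0 := by
    simp only [ne_eq, Real.toNNReal_eq_zero, not_le]; positivity
  set v := Real.toNNReal (σ^2) with hvdef
  set p := ∫ s, φ s ∂(gaussianReal 0 v) with hpdef
  set ts := stdNormalCDFInv p with htsdef
  set β := σ * ts with hβdef
  set q0 := gaussianPDFReal 0 v with hq0def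
  set q1 := gaussianPDFReal a v with hq1def
  set ind := fun s => (Iic β).indicator (fun _ => (1:ℝ)) s with hinddef
  set L₀ := q1 β / q0 β with hL₀def
  -- the shifted integral as a density integral
  have hshift : ∫ s, φ (s + a) ∂(gaussianReal 0 v) = ∫ s, φ s * q1 s := by
    have h1 : ∫ s, φ (s + a) ∂(gaussianReal 0 v)
        = ∫ s, φ s ∂((gaussianReal 0 v).map (· + a)) :=
      (integral_map (measurable_id'.add_const a).aemeasurable hφm.aestronglyMeasurable).symm
    rw [h1, gaussianReal_map_add_const, zero_add, integral_gaussianReal_density hv φ hφm]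
  have hpq : p = ∫ s, φ s * q0 s := integral_gaussianReal_density hv φ hφm 0
  -- integrability facts
  have hq0m : Measurable q0 := measurable_gaussianPDFReal 0 v
  have hq1m : Measurable q1 := measurable_gaussianPDFReal a v
  have hindm : Measurable ind := measurable_const.indicator measurableSet_Iic
  have hind01 : ∀ s, ind s = 0 ∨ ind s = 1 := by
    intro s; by_cases h : s ∈ Iic β
    · exact Or.inr (Set.indicator_of_mem h _)
    · exact Or.inl (Set.indicator_of_notMem h _)
  have habs : ∀ (ψ : ℝ → ℝ), (∀ s, |ψ s| ≤ 1) → ∀ (m' : ℝ),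
      Measurable ψ → Integrable (fun s => ψ s * gaussianPDFReal m' v s) := by
    intro ψ hψ m' hψm
    refine (integrable_gaussianPDFReal m' v).mono'
      (hψm.mul (measurable_gaussianPDFReal m' v)).aestronglyMeasurable
      (ae_of_all _ fun s => ?_)
    have h0 := gaussianPDFReal_nonneg m' v s
    rw [norm_mul]
    calc ‖ψ s‖ * ‖gaussianPDFReal m' v s‖ ≤ 1 * ‖gaussianPDFReal m' v s‖ :=
      mul_le_mul_of_nonneg_right (hψ s) (norm_nonneg _)
    _ = gaussianPDFReal m' v s := by rw [one_mul, Real.norm_eq_abs, abs_of_nonneg h0]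
  have hφabs : ∀ s, |φ s| ≤ 1 := fun s => abs_le.mpr ⟨by linarith [(hφ s).1], (hφ s).2⟩
  have hindabs : ∀ s, |ind s| ≤ 1 := by
    intro s; rcases hind01 s with h | h <;> simp [h]
  have Iφ1 : Integrable (fun s => φ s * q1 s) := habs φ hφabs a hφm
  have Iφ0 : Integrable (fun s => φ s * q0 s) := habs φ hφabs 0 hφm
  have Iind1 : Integrable (fun s => ind s * q1 s) := habs ind hindabs a hindm
  have Iind0 : Integrable (fun s => ind s * q0 s) := habs ind hindabs 0 hindm
  -- indicator integrals
  have hindint : ∀ (m' : ℝ), ∫ s, ind s * gaussianPDFReal m' v s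
      = stdNormalCDF ((β - m') / σ) := by
    intro m'
    have h1 : (fun s => ind s * gaussianPDFReal m' v s)
        = (Iic β).indicator (gaussianPDFReal m' v) := by
      funext s
      have hrfl : ind s = (Iic β).indicator (fun _ => (1:ℝ)) s := rfl
      rw [hrfl, Set.indicator_apply, Set.indicator_apply]
      split_ifs <;> simp
    rw [h1, integral_indicator measurableSet_Iic]
    exact setIntegral_gaussianPDFReal hσ m' β
  have hβσ : β / σ = ts := by
    rw [hβdef, mul_comm σ ts, mul_div_assoc, div_self hσ.ne', mul_one]
  have hind0 : ∫ s, ind s * q0 s = p := by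
    rw [hq0def, hindint 0, sub_zero, hβσ, htsdef, stdNormalCDF_rightInv hp]
  have hind1 : ∫ s, ind s * q1 s = stdNormalCDF (ts - a / σ) := by
    rw [hq1def, hindint a]
    congr 1
    rw [hβdef, sub_div, mul_comm σ ts, mul_div_assoc, div_self hσ.ne', mul_one]
  -- pointwise Neyman-Pearson inequality
  have hq0pos : ∀ s, 0 < q0 s := fun s => gaussianPDFReal_pos 0 v s hv
  have hq1pos : ∀ s, 0 < q1 s := fun s => gaussianPDFReal_pos a v s hv
  have hkey : ∀ s, 0 ≤ (φ s - ind s) * (q1 s - L₀ * q0 s) := by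
    intro s
    have hratio : s ≤ β → q1 s * q0 β ≤ q1 β * q0 s := fun h => gaussianPDFReal_ratio ha h
    have hratio' : β ≤ s → q1 β * q0 s ≤ q1 s * q0 β := fun h => by
      have := gaussianPDFReal_ratio (v := v) ha h
      linarith [this]
    by_cases hs : s ∈ Iic β
    · have hind : ind s = 1 := Set.indicator_of_mem hs _
      have h1 : q1 s - L₀ * q0 s ≤ 0 := by
        rw [hL₀def, div_mul_eq_mul_div, sub_nonpos, le_div_iff₀ (hq0pos β)]
        exact hratio hs
      have h2 : φ s - ind s ≤ 0 := by rw [hind]; linarith [(hφ s).2]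
      nlinarith [h1, h2]
    · have hind : ind s = 0 := Set.indicator_of_notMem hs _
      have hs' : β ≤ s := (not_le.mp (by simpa [Set.mem_Iic] using hs)).le
      have h1 : 0 ≤ q1 s - L₀ * q0 s := by
        rw [hL₀def, div_mul_eq_mul_div, sub_nonneg, div_le_iff₀ (hq0pos β)]
        exact hratio' hs'
      have h2 : 0 ≤ φ s - ind s := by rw [hind]; linarith [(hφ s).1]
      exact mul_nonneg h2 h1
  -- integrate
  have hint : 0 ≤ ∫ s, (φ s - ind s) * (q1 s - L₀ * q0 s) :=
    integral_nonneg hkey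
  have hexpand : ∫ s, (φ s - ind s) * (q1 s - L₀ * q0 s)
      = (∫ s, φ s * q1 s) - (∫ s, ind s * q1 s)
        - L₀ * ((∫ s, φ s * q0 s) - (∫ s, ind s * q0 s)) := by
    have heq : (fun s => (φ s - ind s) * (q1 s - L₀ * q0 s))
        = fun s => (φ s * q1 s - ind s * q1 s) - L₀ * (φ s * q0 s - ind s * q0 s) := by
      funext s; ring
    have I1 : Integrable (fun s => φ s * q1 s - ind s * q1 s) := by exact Iφ1.sub Iind1
    have I2 : Integrable (fun s => L₀ * (φ s * q0 s - ind s * q0 s)) := by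
      exact ((Iφ0.sub Iind0)).const_mul L₀
    rw [heq, integral_sub I1 I2, integral_sub Iφ1 Iind1, integral_const_mul,
      integral_sub Iφ0 Iind0]
  rw [hexpand, ← hpq, hind0, sub_self, mul_zero, sub_zero, hind1] at hint
  rw [hshift]
  linarith

open scoped ENNReal

lemma lintegral_pi_prod {n : ℕ} (μ : Measure ℝ) [SigmaFinite μ] (f : Fin n → ℝ → ℝ≥0∞)
    (hf : ∀ i, Measurable (f i)) :
    ∫⁻ x : Fin n → ℝ, ∏ i, f i (x i) ∂(Measure.pi fun _ => μ) = ∏ i, ∫⁻ t, f i t ∂μ := by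
  induction n with
  | zero =>
      simp [Measure.pi_empty_univ]
  | succ n ih =>
      have MP := (measurePreserving_piFinSuccAbove (fun _ : Fin (n+1) => μ) 0).symm
      rw [← MP.lintegral_comp_emb (MeasurableEquiv.measurableEmbedding _)]
      have heq : ∀ z : ℝ × (Fin n → ℝ),
          (∏ i, f i (((MeasurableEquiv.piFinSuccAbove (fun _ => ℝ) 0).symm z) i))
            = f 0 z.1 * ∏ j : Fin n, f j.succ (z.2 j) := by
        intro z
        rw [Fin.prod_univ_succ]
        simp only [MeasurableEquiv.piFinSuccAbove_symm_apply, Fin.insertNth_apply_same]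
        refine congrArg _ (Finset.prod_congr rfl fun j _ => ?_)
        have hj : (j.succ : Fin (n+1)) = (0 : Fin (n+1)).succAbove j := by
          rw [Fin.zero_succAbove]
        simp [Fin.insertNthEquiv, Fin.insertNth_apply_succAbove]
      simp_rw [heq]
      have hgm : Measurable (fun w : Fin n → ℝ => ∏ j : Fin n, f j.succ (w j)) :=
        Finset.measurable_prod _ fun j _ => (hf j.succ).comp (measurable_pi_apply j)
      have h2 := lintegral_prod_mul (μ := μ) (ν := Measure.pi fun _ : Fin n => μ)
        (f := f 0) (g := fun w => ∏ j : Fin n, f j.succ (w j))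
        (hf 0).aemeasurable hgm.aemeasurable
      exact h2.trans (by rw [ih (fun j => f j.succ) (fun j => hf j.succ), Fin.prod_univ_succ])

instance isoGaussian_prob (d : ℕ) (σ : ℝ) : IsProbabilityMeasure (isoGaussian d σ) := by
  rw [isoGaussian]
  exact Measure.isProbabilityMeasure_map (MeasurableEquiv.toLp 2 (Fin d → ℝ)).measurable.aemeasurable

lemma pi_gaussian_eq_withDensity {n : ℕ} {v : NNReal} (hv : v ≠ 0) :
    (Measure.pi fun _ : Fin n => gaussianReal 0 v)
      = (volume : Measure (Fin n → ℝ)).withDensity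
          (fun x => ∏ i, gaussianPDF 0 v (x i)) := by
  refine Measure.pi_eq fun s hs => ?_
  rw [withDensity_apply _ (MeasurableSet.univ_pi hs),
    ← lintegral_indicator (MeasurableSet.univ_pi hs)]
  have hind : ∀ x : Fin n → ℝ,
      (Set.univ.pi s).indicator (fun x => ∏ i, gaussianPDF 0 v (x i)) x
        = ∏ i, (s i).indicator (fun t => gaussianPDF 0 v t) (x i) := by
    intro x
    by_cases hx : x ∈ Set.univ.pi s
    · rw [Set.indicator_of_mem hx]
      exact Finset.prod_congr rfl fun i _ =>
        (Set.indicator_of_mem (hx i trivial) _).symm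
    · rw [Set.indicator_of_notMem hx]
      have : ∃ i, x i ∉ s i := by simpa [Set.mem_pi] using hx
      obtain ⟨i, hi⟩ := this
      exact (Finset.prod_eq_zero (Finset.mem_univ i) (Set.indicator_of_notMem hi _)).symm
  simp_rw [hind]
  rw [MeasureTheory.volume_pi,
    lintegral_pi_prod volume _ (fun i => (measurable_gaussianPDF 0 v).indicator (hs i))]
  refine Finset.prod_congr rfl fun i _ => ?_
  rw [lintegral_indicator (hs i), ← withDensity_apply _ (hs i),
    ← gaussianReal_of_var_ne_zero 0 hv]

lemma withDensity_map_equiv {α β : Type*} [MeasurableSpace α] [MeasurableSpace β]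
    (e : α ≃ᵐ β) (μ : Measure α) (ρ : β → ℝ≥0∞) (hρ : Measurable ρ) :
    (μ.withDensity (fun a => ρ (e a))).map e = (μ.map e).withDensity ρ := by
  ext s hs
  rw [Measure.map_apply e.measurable hs, withDensity_apply _ hs,
    withDensity_apply _ (e.measurable hs), setLIntegral_map hs hρ e.measurable]

noncomputable def gaussDensity (d : ℕ) (σ : ℝ) (ξ : EuclideanSpace ℝ (Fin d)) : ℝ≥0∞ :=
  ENNReal.ofReal ((Real.sqrt (2 * Real.pi * (σ^2)))⁻¹ ^ d
    * Real.exp (-‖ξ‖^2 / (2 * σ^2)))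

lemma gaussDensity_measurable (d : ℕ) (σ : ℝ) : Measurable (gaussDensity d σ) := by
  unfold gaussDensity
  apply ENNReal.measurable_ofReal.comp
  fun_prop

lemma prod_gaussianPDF_eq {d : ℕ} {σ : ℝ} (hσ : 0 < σ) (ξ : EuclideanSpace ℝ (Fin d)) :
    ∏ i, gaussianPDF 0 (Real.toNNReal (σ^2)) (ξ i) = gaussDensity d σ ξ := by
  have hv : ((Real.toNNReal (σ^2) : NNReal) : ℝ) = σ^2 := Real.coe_toNNReal _ (sq_nonneg σ)
  have hnorm : ‖ξ‖^2 = ∑ i, (ξ i)^2 := by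
    rw [EuclideanSpace.norm_eq, Real.sq_sqrt (by positivity)]
    refine Finset.sum_congr rfl fun i _ => ?_
    rw [Real.norm_eq_abs, sq_abs]
  unfold gaussianPDF gaussDensity
  rw [← ENNReal.ofReal_prod_of_nonneg (fun i _ => gaussianPDFReal_nonneg _ _ _)]
  congr 1
  unfold gaussianPDFReal
  rw [Finset.prod_mul_distrib, Finset.prod_const, ← Real.exp_sum, Finset.card_univ,
    Fintype.card_fin]
  congr 2
  · rw [hv]
  · rw [hv, hnorm, ← Finset.sum_neg_distrib, ← Finset.sum_div]
    congr 1
    exact Finset.sum_congr rfl fun i _ => by rw [sub_zero]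

lemma isoGaussian_eq_withDensity {d : ℕ} {σ : ℝ} (hσ : 0 < σ) :
    isoGaussian d σ
      = (volume : Measure (EuclideanSpace ℝ (Fin d))).withDensity (gaussDensity d σ) := by
  have hv : (Real.toNNReal (σ^2)) ≠ 0 := by
    simp only [ne_eq, Real.toNNReal_eq_zero, not_le]; positivity
  rw [isoGaussian, pi_gaussian_eq_withDensity hv]
  have h1 : (fun x : Fin d → ℝ => ∏ i, gaussianPDF 0 (Real.toNNReal (σ^2)) (x i))
      = fun x => gaussDensity d σ ((MeasurableEquiv.toLp 2 (Fin d → ℝ)) x) := by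
    funext x
    rw [← prod_gaussianPDF_eq hσ ((MeasurableEquiv.toLp 2 (Fin d → ℝ)) x)]
    rfl
  rw [h1, withDensity_map_equiv (MeasurableEquiv.toLp 2 (Fin d → ℝ)) volume
    (gaussDensity d σ) (gaussDensity_measurable d σ)]
  have hmp : MeasurePreserving (MeasurableEquiv.toLp 2 (Fin d → ℝ)) volume volume :=
    (EuclideanSpace.volume_preserving_symm_measurableEquiv_toLp (Fin d)).symm
  rw [hmp.map_eq]

lemma isoGaussian_map_rot {d : ℕ} {σ : ℝ} (hσ : 0 < σ)
    (U : EuclideanSpace ℝ (Fin d) ≃ₗᵢ[ℝ] EuclideanSpace ℝ (Fin d)) :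
    (isoGaussian d σ).map U = isoGaussian d σ := by
  have h2 : (fun a => gaussDensity d σ (U a)) = gaussDensity d σ := by
    funext a; unfold gaussDensity; rw [U.norm_map]
  rw [isoGaussian_eq_withDensity hσ]
  have e : EuclideanSpace ℝ (Fin d) ≃ᵐ EuclideanSpace ℝ (Fin d) :=
    U.toHomeomorph.toMeasurableEquiv
  calc (volume.withDensity (gaussDensity d σ)).map U
      = (volume.withDensity (fun a => gaussDensity d σ
          (U.toHomeomorph.toMeasurableEquiv a))).map U.toHomeomorph.toMeasurableEquiv := by
        rw [show (fun a => gaussDensity d σ (U.toHomeomorph.toMeasurableEquiv a))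
          = gaussDensity d σ from h2]
        rfl
    _ = (volume.map U.toHomeomorph.toMeasurableEquiv).withDensity (gaussDensity d σ) :=
        withDensity_map_equiv _ _ _ (gaussDensity_measurable d σ)
    _ = volume.withDensity (gaussDensity d σ) := by
        rw [show (⇑U.toHomeomorph.toMeasurableEquiv : EuclideanSpace ℝ (Fin d) → _) = ⇑U from rfl,
          U.measurePreserving.map_eq]

lemma integrable_bdd {β : Type*} [MeasurableSpace β] (μ : Measure β) [IsFiniteMeasure μ]
    (g : β → ℝ) (hm : Measurable g) (hb : ∀ z, |g z| ≤ 1) : Integrable g μ :=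
  (integrable_const (1:ℝ)).mono' hm.aestronglyMeasurable (ae_of_all _ fun z => by
    simpa using hb z)

lemma smooth_lb {d : ℕ} {σ : ℝ} (hσ : 0 < σ) (f : EuclideanSpace ℝ (Fin d) → ℝ)
    (hfm : Measurable f) (hf : ∀ z, f z ∈ Icc (0:ℝ) 1)
    (x δ : EuclideanSpace ℝ (Fin d))
    (hp : (∫ ξ, f (x + ξ) ∂isoGaussian d σ) ∈ Ioo (0:ℝ) 1) :
    stdNormalCDF (stdNormalCDFInv (∫ ξ, f (x + ξ) ∂isoGaussian d σ) - ‖δ‖ / σ)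
      ≤ ∫ ξ, f (x + δ + ξ) ∂isoGaussian d σ := by
  by_cases hδ : δ = 0
  · subst hδ
    simp only [norm_zero, zero_div, sub_zero, add_zero]
    rw [stdNormalCDF_rightInv hp]
  · -- pick a coordinate where δ is nonzero
    have hne : ∃ i, δ i ≠ 0 := by
      by_contra hcon
      push_neg at hcon
      exact hδ (by ext i; exact hcon i)
    obtain ⟨i₀, hi₀⟩ := hne
    have hd : d ≠ 0 := by rintro rfl; exact Fin.elim0 i₀
    obtain ⟨n, rfl⟩ := Nat.exists_eq_succ_of_ne_zero hd
    set μ := isoGaussian (n+1) σ with hμdef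
    set a := ‖δ‖ with hadef
    have ha0 : 0 < a := norm_pos_iff.mpr hδ
    set u : EuclideanSpace ℝ (Fin (n+1)) := EuclideanSpace.single i₀ (1:ℝ) with hudef
    set w : EuclideanSpace ℝ (Fin (n+1)) := a • u with hwdef
    have hw : ‖w‖ = ‖δ‖ := by
      rw [hwdef, norm_smul, hudef, EuclideanSpace.norm_single]
      simp [abs_of_pos ha0]
      exact hadef
    set U := Submodule.reflection (ℝ ∙ (w - δ))ᗮ with hUdef
    have hUw : U w = δ := Submodule.reflection_sub hw
    -- rotation invariance
    have hrot : ∀ g : EuclideanSpace ℝ (Fin (n+1)) → ℝ, Measurable g →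
        ∫ ξ, g ξ ∂μ = ∫ ξ, g (U ξ) ∂μ := by
      intro g hg
      conv_lhs => rw [hμdef, ← isoGaussian_map_rot hσ U]
      exact integral_map (U.toLinearEquiv.toEquiv.toFun |> fun _ =>
        U.continuous.measurable.aemeasurable) hg.aestronglyMeasurable
    have eq1 : ∫ ξ, f (x + ξ) ∂μ = ∫ ξ, f (x + U ξ) ∂μ :=
      hrot (fun ξ => f (x + ξ)) (hfm.comp (measurable_id.const_add x))
    have hkey : ∀ ξ, x + δ + U ξ = x + U (ξ + w) := by
      intro ξ
      rw [map_add, hUw]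
      abel
    have eq2 : ∫ ξ, f (x + δ + ξ) ∂μ = ∫ ξ, f (x + U (ξ + w)) ∂μ := by
      have h := hrot (fun ξ => f (x + δ + ξ)) (hfm.comp (measurable_id.const_add (x + δ)))
      rw [h]
      refine integral_congr_ae (ae_of_all _ fun ξ => ?_)
      show f (x + δ + U ξ) = f (x + U (ξ + w))
      rw [hkey ξ]
    -- pass to pi coordinates
    set e := (MeasurableEquiv.toLp 2 (Fin (n+1) → ℝ)).symm with hedef
    set π := Measure.pi (fun _ : Fin (n+1) => gaussianReal 0 (Real.toNNReal (σ ^ 2))) with hπdef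
    set G : (Fin (n+1) → ℝ) → ℝ := fun ζ => f (x + U (e.symm ζ)) with hGdef
    have hGm : Measurable G :=
      hfm.comp ((U.continuous.measurable.comp e.symm.measurable).const_add x)
    have hGb : ∀ ζ, |G ζ| ≤ 1 := fun ζ =>
      abs_le.mpr ⟨by linarith [(hf (x + U (e.symm ζ))).1], (hf (x + U (e.symm ζ))).2⟩
    have hμπ : μ = π.map e.symm := rfl
    have heq1 : ∫ ξ, f (x + U ξ) ∂μ = ∫ ζ, G ζ ∂π := by
      rw [hμπ]
      exact integral_map e.symm.measurable.aemeasurable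
        ((hfm.comp ((U.continuous.measurable).const_add x)).aestronglyMeasurable)
    set b : Fin (n+1) → ℝ := e w with hbdef
    have hb : ∀ ζ : Fin (n+1) → ℝ, e.symm ζ + w = e.symm (ζ + b) := fun ζ => rfl
    have hbsingle : b = Pi.single i₀ a := by
      funext j
      have h1 : b j = a * u j := rfl
      rw [h1, hudef, EuclideanSpace.single_apply, Pi.single_apply]
      split_ifs <;> ring
    have heq2 : ∫ ξ, f (x + U (ξ + w)) ∂μ = ∫ ζ, G (ζ + b) ∂π := by
      rw [hμπ]
      have := integral_map (μ := π) e.symm.measurable.aemeasurable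
        (f := fun ξ => f (x + U (ξ + w)))
        ((hfm.comp (((U.continuous.measurable).comp
          (measurable_id.add_const w)).const_add x)).aestronglyMeasurable)
      rw [this]
      exact integral_congr_ae (ae_of_all _ fun ζ => by rw [hGdef]; simp only; rw [hb ζ])
    -- split off coordinate i₀
    set pe := MeasurableEquiv.piFinSuccAbove (fun _ : Fin (n+1) => ℝ) i₀ with hpedef
    set N0 := gaussianReal 0 (Real.toNNReal (σ ^ 2)) with hN0def
    set πrest := Measure.pi (fun _ : Fin n => gaussianReal 0 (Real.toNNReal (σ ^ 2))) with hπrdef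
    have MP : MeasurePreserving pe π (N0.prod πrest) :=
      measurePreserving_piFinSuccAbove (fun _ : Fin (n+1) => gaussianReal 0 (Real.toNNReal (σ ^ 2))) i₀
    have hcomp : ∀ (H : (Fin (n+1) → ℝ) → ℝ), Measurable H →
        ∫ ζ, H ζ ∂π = ∫ z, H (pe.symm z) ∂(N0.prod πrest) := by
      intro H hH
      have hs : AEStronglyMeasurable (fun z => H (pe.symm z)) (Measure.map pe π) :=
        ((hH.comp pe.symm.measurable : Measurable fun z => H (pe.symm z))).aestronglyMeasurable
      rw [← MP.map_eq, integral_map pe.measurable.aemeasurable hs]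
      simp only [MeasurableEquiv.symm_apply_apply]
    set φ : ℝ → ℝ := fun s => ∫ t, G (pe.symm (s, t)) ∂πrest with hφdef
    have hGpm : Measurable (fun z : ℝ × (Fin n → ℝ) => G (pe.symm z)) :=
      hGm.comp pe.symm.measurable
    have hφm : Measurable φ :=
      (hGpm.stronglyMeasurable.integral_prod_right').measurable
    have hφb : ∀ s, φ s ∈ Icc (0:ℝ) 1 := by
      intro s
      constructor
      · exact integral_nonneg fun t => (hf _).1
      · calc ∫ t, G (pe.symm (s, t)) ∂πrest ≤ ∫ _t, (1:ℝ) ∂πrest := by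
              refine integral_mono (integrable_bdd _ _ (hGpm.comp
                ((measurable_const (a := s)).prodMk measurable_id))
                (fun t => hGb _)) (integrable_const 1) fun t => (hf _).2
        _ = 1 := by simp
    -- shift identity
    have hshiftco : ∀ (s : ℝ) (t : Fin n → ℝ),
        pe.symm (s, t) + Pi.single i₀ a = pe.symm (s + a, t) := by
      intro s t
      have hsymm : ∀ (s : ℝ) (t : Fin n → ℝ), pe.symm (s, t) = i₀.insertNth s t := by
        intro s t
        rfl
      rw [hsymm, hsymm]
      funext j
      rw [Pi.add_apply]
      refine Fin.succAboveCases i₀ ?_ ?_ j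
      · rw [Fin.insertNth_apply_same, Fin.insertNth_apply_same, Pi.single_eq_same]
      · intro j'
        rw [Fin.insertNth_apply_succAbove, Fin.insertNth_apply_succAbove,
          Pi.single_eq_of_ne (Fin.succAbove_ne i₀ j'), add_zero]
    -- express both integrals through φ
    have hstep1 : ∫ ξ, f (x + ξ) ∂μ = ∫ s, φ s ∂N0 := by
      rw [eq1, heq1, hcomp G hGm,
        MeasureTheory.integral_prod _ (integrable_bdd _ _ hGpm (fun z => hGb _))]
    have hstep2 : ∫ ξ, f (x + δ + ξ) ∂μ = ∫ s, φ (s + a) ∂N0 := by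
      rw [eq2, heq2, hcomp (fun ζ => G (ζ + b)) (hGm.comp (measurable_id.add_const b))]
      have hre : ∀ z : ℝ × (Fin n → ℝ), G (pe.symm z + b) = G (pe.symm (z.1 + a, z.2)) := by
        intro z
        rw [hbsingle, ← Prod.mk.eta (p := z), hshiftco z.1 z.2]
      rw [integral_congr_ae (ae_of_all _ fun z => hre z)]
      have hm2 : Measurable (fun z : ℝ × (Fin n → ℝ) => G (pe.symm (z.1 + a, z.2))) :=
        hGpm.comp ((measurable_fst.add_const a).prodMk measurable_snd)
      rw [MeasureTheory.integral_prod _ (integrable_bdd _ _ hm2 (fun z => hGb _))]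
    rw [hstep1] at hp ⊢
    rw [hstep2]
    exact one_dim_np hσ φ hφm hφb ha0.le hp

lemma smooth_lip {d : ℕ} {σ : ℝ} (hσ : 0 < σ) (f : EuclideanSpace ℝ (Fin d) → ℝ)
    (hfm : Measurable f) (hf : ∀ z, f z ∈ Icc (0:ℝ) 1)
    (x δ : EuclideanSpace ℝ (Fin d)) {p q : ℝ}
    (hP : ∫ ξ, f (x + ξ) ∂isoGaussian d σ = p)
    (hQ : ∫ ξ, f (x + δ + ξ) ∂isoGaussian d σ = q)
    (hp : p ∈ Ioo (0:ℝ) 1) (hq : q ∈ Ioo (0:ℝ) 1) :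
    stdNormalCDFInv p - ‖δ‖ / σ ≤ stdNormalCDFInv q := by
  have hfm' : Measurable (fun z => 1 - f z) := measurable_const.sub hfm
  have hf' : ∀ z, (1 - f z) ∈ Icc (0:ℝ) 1 := fun z =>
    ⟨by linarith [(hf z).2], by linarith [(hf z).1]⟩
  have hFeq : ∀ z : EuclideanSpace ℝ (Fin d),
      ∫ ξ, (1 - f (z + ξ)) ∂isoGaussian d σ = 1 - ∫ ξ, f (z + ξ) ∂isoGaussian d σ := by
    intro z
    have Ifz : Integrable (fun ξ => f (z + ξ)) (isoGaussian d σ) :=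
      integrable_bdd _ _
        ((hfm.comp (measurable_id.const_add z) : Measurable fun ξ => f (z + ξ)))
        (fun ξ => abs_le.mpr ⟨by linarith [(hf (z + ξ)).1], (hf (z + ξ)).2⟩)
    rw [integral_sub (integrable_const 1) Ifz]
    simp
  have hq' : (1 - q) ∈ Ioo (0:ℝ) 1 := ⟨by linarith [hq.2], by linarith [hq.1]⟩
  have h := smooth_lb hσ (fun z => 1 - f z) hfm' hf' (x + δ) (-δ)
    (by rw [show (∫ ξ, (1 - f (x + δ + ξ)) ∂isoGaussian d σ) = 1 - q from
      (hFeq (x + δ)).trans (by rw [hQ])]; exact hq')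
  rw [show (∫ ξ, (1 - f (x + δ + -δ + ξ)) ∂isoGaussian d σ) = 1 - p from
    (hFeq (x + δ + -δ)).trans (by rw [show x + δ + -δ = x from by abel, hP]),
    show (∫ ξ, (1 - f (x + δ + ξ)) ∂isoGaussian d σ) = 1 - q from
      (hFeq (x + δ)).trans (by rw [hQ]),
    stdNormalCDFInv_one_sub hq, norm_neg] at h
  have h2 : stdNormalCDF (-(stdNormalCDFInv q + ‖δ‖ / σ)) ≤ 1 - p := by
    convert h using 2; ring
  rw [stdNormalCDF_neg] at h2
  have h3 : p ≤ stdNormalCDF (stdNormalCDFInv q + ‖δ‖ / σ) := by linarith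
  have h4 := (le_stdNormalCDFInv_iff hp).mpr h3
  linarith


/-- **Theorem 5: RS-based certified radius of the mixed classifier.**
If `h` is a randomized smoothing classifier, then the mixed classifier
`h^α_i = log ((1-α) g_i + α h_i)` predicts class `y = argmax_i h_i(x)` on every `x + δ`
with `‖δ‖₂ ≤ r_σ^α(x) = (σ/2)(Φ⁻¹(α h_y(x)) - Φ⁻¹(α h_{y'}(x) + 1 - α))`. -/
theorem mixed_classifier_randomized_smoothing_certified_radius
    {d c : ℕ} (hc : 2 ≤ c) (σ : ℝ) (hσ : 0 < σ)
    (hbar : EuclideanSpace ℝ (Fin d) → Fin c → ℝ)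
    (hbar_meas : ∀ i, Measurable fun z => hbar z i)
    (hbar_range : ∀ z i, hbar z i ∈ Set.Icc (0 : ℝ) 1)
    (h : EuclideanSpace ℝ (Fin d) → Fin c → ℝ)
    (hdef : ∀ x i, h x i = ∫ ξ, hbar (x + ξ) i ∂(isoGaussian d σ))
    (hrange : ∀ x i, h x i ∈ Set.Ioo (0 : ℝ) 1)
    (g : EuclideanSpace ℝ (Fin d) → Fin c → ℝ)
    (hg : ∀ x i, g x i ∈ Set.Icc (0 : ℝ) 1)
    (x : EuclideanSpace ℝ (Fin d))
    (y : Fin c) (hy : ∀ i, h x i ≤ h x y)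
    (y' : Fin c) (hy' : y' ≠ y) (hy'max : ∀ i, i ≠ y → h x i ≤ h x y')
    (α : ℝ) (hα : α ∈ Set.Icc (1 / 2 : ℝ) 1)
    (hαy : α * h x y ∈ Set.Ioo (0 : ℝ) 1)
    (hαy' : α * h x y' + 1 - α ∈ Set.Ioo (0 : ℝ) 1) :
    ∀ δ : EuclideanSpace ℝ (Fin d),
      ‖δ‖ ≤ σ / 2 * (stdNormalCDFInv (α * h x y) - stdNormalCDFInv (α * h x y' + 1 - α)) →
      ∀ i : Fin c,
        (1 - α) * g (x + δ) i + α * h (x + δ) i ≤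
          (1 - α) * g (x + δ) y + α * h (x + δ) y := by
  intro δ hδ i
  obtain ⟨hα2, hα1⟩ := hα
  have hαpos : (0:ℝ) < α := lt_of_lt_of_le (by norm_num) hα2
  by_cases hiy : i = y
  · subst hiy; exact le_refl _
  -- integral computations
  have hFy : ∀ z, ∫ ξ, (α * hbar (z + ξ) y) ∂(isoGaussian d σ) = α * h z y := by
    intro z
    rw [hdef z y]
    exact integral_const_mul α _
  have hFi : ∀ (z : EuclideanSpace ℝ (Fin d)) (j : Fin c),
      ∫ ξ, (α * hbar (z + ξ) j + (1 - α)) ∂(isoGaussian d σ) = α * h z j + (1 - α) := by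
    intro z j
    have Ij : Integrable (fun ξ => α * hbar (z + ξ) j) (isoGaussian d σ) := by
      refine integrable_bdd _ _
        (((hbar_meas j).comp (measurable_id.const_add z)).const_mul α) (fun ξ => ?_)
      have h1 := (hbar_range (z + ξ) j).1
      have h2 := (hbar_range (z + ξ) j).2
      rw [abs_mul, abs_of_pos hαpos, abs_of_nonneg h1]
      nlinarith
    rw [integral_add Ij (integrable_const (1 - α)), integral_const_mul, ← hdef z j]
    simp
  -- measurability and ranges of the two auxiliary classifiers
  have hfym : Measurable (fun z => α * hbar z y) := (hbar_meas y).const_mul α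
  have hfyr : ∀ z, (α * hbar z y) ∈ Icc (0:ℝ) 1 := by
    intro z
    constructor
    · exact mul_nonneg hαpos.le (hbar_range z y).1
    · nlinarith [(hbar_range z y).2, (hbar_range z y).1]
  have hfim : Measurable (fun z => α * hbar z i + (1 - α)) :=
    ((hbar_meas i).const_mul α).add_const (1 - α)
  have hfir : ∀ z, (α * hbar z i + (1 - α)) ∈ Icc (0:ℝ) 1 := by
    intro z
    constructor
    · nlinarith [(hbar_range z i).1]
    · nlinarith [(hbar_range z i).2]
  -- membership facts
  have hq1 : α * h (x + δ) y ∈ Ioo (0:ℝ) 1 := by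
    constructor
    · exact mul_pos hαpos (hrange (x + δ) y).1
    · nlinarith [(hrange (x + δ) y).2, (hrange (x + δ) y).1]
  have hp2 : α * h x i + (1 - α) ∈ Ioo (0:ℝ) 1 := by
    constructor
    · nlinarith [(hrange x i).1]
    · have hi' := mul_le_mul_of_nonneg_left (hy'max i hiy) hαpos.le
      have := hαy'.2
      linarith
  have hq2 : α * h (x + δ) i + (1 - α) ∈ Ioo (0:ℝ) 1 := by
    constructor
    · nlinarith [(hrange (x + δ) i).1]
    · nlinarith [(hrange (x + δ) i).2]
  have hp2' : α * h x y' + 1 - α ∈ Ioo (0:ℝ) 1 := hαy'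
  have hp2'' : α * h x y' + (1 - α) ∈ Ioo (0:ℝ) 1 := by
    have hrw : α * h x y' + (1 - α) = α * h x y' + 1 - α := by ring
    rw [hrw]; exact hαy'
  -- Lipschitz bounds
  have L1 := smooth_lip hσ (fun z => α * hbar z y) hfym hfyr x δ
    (hFy x) (hFy (x + δ)) hαy hq1
  have L2 := smooth_lip hσ (fun z => α * hbar z i + (1 - α)) hfim hfir (x + δ) (-δ)
    (hFi (x + δ) i)
    ((hFi (x + δ + -δ) i).trans (by rw [show x + δ + -δ = x from by abel]))
    hq2 hp2
  rw [norm_neg] at L2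
  -- monotonicity step
  have hmono : stdNormalCDFInv (α * h x i + (1 - α))
      ≤ stdNormalCDFInv (α * h x y' + 1 - α) := by
    refine stdNormalCDFInv_mono hp2 hαy' ?_
    have := mul_le_mul_of_nonneg_left (hy'max i hiy) hαpos.le
    linarith
  -- radius bound
  have hr : ‖δ‖ / σ ≤ (stdNormalCDFInv (α * h x y)
      - stdNormalCDFInv (α * h x y' + 1 - α)) / 2 := by
    rw [div_le_div_iff₀ hσ (by norm_num : (0:ℝ) < 2)]
    calc ‖δ‖ * 2 ≤ (σ / 2 * (stdNormalCDFInv (α * h x y)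
          - stdNormalCDFInv (α * h x y' + 1 - α))) * 2 := by linarith
    _ = (stdNormalCDFInv (α * h x y) - stdNormalCDFInv (α * h x y' + 1 - α)) * σ := by ring
  -- combine
  have hfinal : stdNormalCDFInv (α * h (x + δ) i + (1 - α))
      ≤ stdNormalCDFInv (α * h (x + δ) y) := by linarith
  have hfinal2 : α * h (x + δ) i + (1 - α) ≤ α * h (x + δ) y := by
    have hA := stdNormalCDF_rightInv hq2
    have hB := stdNormalCDF_rightInv hq1
    have := stdNormalCDF_mono hfinal
    rw [hA, hB] at this
    exact this
  have e1 : (1 - α) * g (x + δ) i ≤ (1 - α) * 1 :=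
    mul_le_mul_of_nonneg_left (hg (x + δ) i).2 (by linarith)
  have e2 : 0 ≤ (1 - α) * g (x + δ) y :=
    mul_nonneg (by linarith) (hg (x + δ) y).1
  linarith
end
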